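/- arXiv:0803.3796 — 11 statements merged into one kernel-verified Lean document; each statement's English description precedes it below -/
import Mathlib

section
/- For every probabilistic transition system ⟨S, π⟩ and every discount factor δ ∈ (0,1], the function d_δ is a 1-bounded pseudometric on S: it takes values in [0,1], d_δ(s,s)=0 for all s, d_δ(s₁,s₂)=d_δ(s₂,s₁) for all s₁,s₂, and d_δ(s₁,s₃) ≤ d_δ(s₁,s₂)+d_δ(s₂,s₃) for all s₁,s₂,s₃. -/
open scoped Classical
open Finset

/-- A probabilistic transition system on a finite state set `S`:
`prob s s'` is the probability of a transition from `s` to `s'`;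
each row sums to `0` or `1`. -/
structure PTS (S : Type) [Fintype S] where
  prob : S → S → ℝ
  nonneg : ∀ s s', 0 ≤ prob s s'
  le_one : ∀ s s', prob s s' ≤ 1
  sum01 : ∀ s, (∑ s', prob s s') = 0 ∨ (∑ s', prob s s') = 1

/-- The logic `L`: `true`, diamond, conjunction, negation and `φ ⊖ q` with `q ∈ [0,1] ∩ ℚ`. -/
inductive Formula : Type where
  | tt : Formula
  | diam : Formula → Formula
  | conj : Formula → Formula → Formula
  | neg : Formula → Formula
  | sub : Formula → {q : ℚ // 0 ≤ q ∧ q ≤ 1} → Formula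

variable {S : Type} [Fintype S]

/-- The real-valued interpretation `⟦φ⟧_δ` of a formula. -/
noncomputable def interp (M : PTS S) (δ : ℝ) : Formula → S → ℝ
  | .tt, _ => 1
  | .diam φ, s => δ * ∑ s', M.prob s s' * interp M δ φ s'
  | .conj φ ψ, s => min (interp M δ φ s) (interp M δ ψ s)
  | .neg φ, s => 1 - interp M δ φ s
  | .sub φ q, s => max (interp M δ φ s - ((q : ℚ) : ℝ)) 0

/-- The behavioural distance `d_δ(s₁,s₂) = sup_{φ ∈ L} ⟦φ⟧_δ(s₁) − ⟦φ⟧_δ(s₂)`. -/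
noncomputable def pdist (M : PTS S) (δ : ℝ) (s₁ s₂ : S) : ℝ :=
  ⨆ φ : Formula, (interp M δ φ s₁ - interp M δ φ s₂)

/-- `d` is a 1-bounded pseudometric on `S`. -/
def IsPseudo (d : S → S → ℝ) : Prop :=
  (∀ s₁ s₂, 0 ≤ d s₁ s₂ ∧ d s₁ s₂ ≤ 1) ∧ (∀ s, d s s = 0) ∧
  (∀ s₁ s₂, d s₁ s₂ = d s₂ s₁) ∧ (∀ s₁ s₂ s₃, d s₁ s₃ ≤ d s₁ s₂ + d s₂ s₃)

/-- The order `⊑` on 1-bounded pseudometrics: `d₁ ⊑ d₂` iff `d₁ ≥ d₂` pointwise. -/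
def ple (d₁ d₂ : S → S → ℝ) : Prop := ∀ s₁ s₂, d₂ s₁ s₂ ≤ d₁ s₁ s₂

/-- `f : S → [0,1]` is nonexpansive with respect to `d`. -/
def Nonexp (d : S → S → ℝ) (f : S → ℝ) : Prop :=
  (∀ s, 0 ≤ f s ∧ f s ≤ 1) ∧ ∀ s₁ s₂, |f s₁ - f s₂| ≤ d s₁ s₂

/-- The functional `Δ` on 1-bounded pseudometrics. -/
noncomputable def Delta (M : PTS S) (d : S → S → ℝ) (s₁ s₂ : S) : ℝ :=
  if (∑ s, M.prob s₁ s) = 1 ∧ (∑ s, M.prob s₂ s) = 1 then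
    sSup {x : ℝ | ∃ f : S → ℝ, Nonexp d f ∧ x = ∑ s, f s * (M.prob s₁ s - M.prob s₂ s)}
  else if (∑ s, M.prob s₁ s) = 0 ∧ (∑ s, M.prob s₂ s) = 0 then 0
  else 1

/-- `R` is a probabilistic bisimulation on `M`. -/
def IsBisim (M : PTS S) (R : S → S → Prop) : Prop :=
  Equivalence R ∧ ∀ s₁ s₂, R s₁ s₂ → ∀ e : S,
    (∑ s, if R e s then M.prob s₁ s else 0) = (∑ s, if R e s then M.prob s₂ s else 0)

/-- `s₁` and `s₂` are probabilistic bisimilar. -/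
def Bisimilar (M : PTS S) (s₁ s₂ : S) : Prop := ∃ R, IsBisim M R ∧ R s₁ s₂

/-- The modal depth of a formula. -/
def Formula.depth : Formula → ℕ
  | .tt => 0
  | .diam φ => φ.depth + 1
  | .conj φ ψ => max φ.depth ψ.depth
  | .neg φ => φ.depth
  | .sub φ _ => φ.depth

/-- The ratio `ρ(d₁,d₂) = min { d₂(s₁,s₂)/d₁(s₁,s₂) | d₂(s₁,s₂) > 0 }`,
with the minimum of the empty set taken to be `1`. -/
noncomputable def rho (d₁ d₂ : S → S → ℝ) : ℝ :=
  if {x : ℝ | ∃ s₁ s₂, 0 < d₂ s₁ s₂ ∧ x = d₂ s₁ s₂ / d₁ s₁ s₂}.Nonempty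
  then sInf {x : ℝ | ∃ s₁ s₂, 0 < d₂ s₁ s₂ ∧ x = d₂ s₁ s₂ / d₁ s₁ s₂} else 1

/-- `μ = min { d(s₁,s₂) | d(s₁,s₂) > 0 }`, with the minimum of the empty set taken to be `1`. -/
noncomputable def muMin (d : S → S → ℝ) : ℝ :=
  if {x : ℝ | ∃ s₁ s₂, 0 < d s₁ s₂ ∧ x = d s₁ s₂}.Nonempty
  then sInf {x : ℝ | ∃ s₁ s₂, 0 < d s₁ s₂ ∧ x = d s₁ s₂} else 1

/-- The iterates `d⁰ = ⊤`, `d^{n+1} = Δ(d^n)`. -/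
noncomputable def iterd (M : PTS S) : ℕ → S → S → ℝ
  | 0 => fun _ _ => 0
  | n + 1 => Delta M (iterd M n)

/-- The termination probabilities `τₙ`. -/
noncomputable def term (M : PTS S) : ℕ → S → ℝ
  | 0, _ => 0
  | n + 1, s => if (∑ s', M.prob s s') = 0 then 1 else ∑ s', M.prob s s' * term M n s'

instance : Nonempty Formula := ⟨.tt⟩

lemma interp_bounds (M : PTS S) (δ : ℝ) (hδ : 0 < δ ∧ δ ≤ 1) (φ : Formula) (s : S) :
    0 ≤ interp M δ φ s ∧ interp M δ φ s ≤ 1 := by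
  induction φ generalizing s with
  | tt => simp [interp]
  | diam φ ih =>
    constructor
    · apply mul_nonneg hδ.1.le
      exact Finset.sum_nonneg fun s' _ => mul_nonneg (M.nonneg s s') (ih s').1
    · calc δ * ∑ s', M.prob s s' * interp M δ φ s'
          ≤ 1 * ∑ s', M.prob s s' * 1 := by
            apply mul_le_mul hδ.2
            · exact Finset.sum_le_sum fun s' _ =>
                mul_le_mul_of_nonneg_left (ih s').2 (M.nonneg s s')
            · exact Finset.sum_nonneg fun s' _ => mul_nonneg (M.nonneg s s') (ih s').1
            · norm_num
      _ ≤ 1 := by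
            simp only [mul_one, one_mul]
            rcases M.sum01 s with h | h <;> simp [h]
  | conj φ ψ ihφ ihψ =>
    exact ⟨le_min (ihφ s).1 (ihψ s).1, min_le_of_left_le (ihφ s).2⟩
  | neg φ ih =>
    constructor
    · simp [interp]; exact (ih s).2
    · simp [interp]; linarith [(ih s).1]
  | sub φ q ih =>
    refine ⟨le_max_right _ _, max_le ?_ zero_le_one⟩
    have : (0:ℝ) ≤ ((q:ℚ):ℝ) := by exact_mod_cast q.2.1
    linarith [(ih s).2]

lemma pdist_bdd (M : PTS S) (δ : ℝ) (hδ : 0 < δ ∧ δ ≤ 1) (s₁ s₂ : S) :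
    BddAbove (Set.range fun φ : Formula => interp M δ φ s₁ - interp M δ φ s₂) := by
  refine ⟨1, ?_⟩
  rintro x ⟨φ, rfl⟩
  have h1 := interp_bounds M δ hδ φ s₁
  have h2 := interp_bounds M δ hδ φ s₂
  simp only
  linarith [h1.2, h2.1]

/-- `d_δ` is a 1-bounded pseudometric on `S`. -/
theorem stmt1 (S : Type) [Fintype S] (M : PTS S) (δ : ℝ) (hδ : 0 < δ ∧ δ ≤ 1) :
    IsPseudo (pdist M δ) := by
  have hb := pdist_bdd M δ hδ
  have hle : ∀ s₁ s₂ (φ : Formula),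
      interp M δ φ s₁ - interp M δ φ s₂ ≤ pdist M δ s₁ s₂ := fun s₁ s₂ φ =>
    le_ciSup (hb s₁ s₂) φ
  refine ⟨fun s₁ s₂ => ⟨?_, ?_⟩, fun s => ?_, fun s₁ s₂ => ?_, fun s₁ s₂ s₃ => ?_⟩
  · have := hle s₁ s₂ Formula.tt
    simpa [interp] using this
  · refine ciSup_le fun φ => ?_
    have h1 := interp_bounds M δ hδ φ s₁
    have h2 := interp_bounds M δ hδ φ s₂
    linarith [h1.2, h2.1]
  · have h1 : pdist M δ s s ≤ 0 := ciSup_le fun φ => by simp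
    have h2 := hle s s Formula.tt
    simp only [interp, sub_self] at h2
    linarith
  · have key : ∀ a b : S, pdist M δ a b ≤ pdist M δ b a := by
      intro a b
      refine ciSup_le fun φ => ?_
      have := hle b a (Formula.neg φ)
      simp only [interp] at this
      linarith
    exact le_antisymm (key s₁ s₂) (key s₂ s₁)
  · refine ciSup_le fun φ => ?_
    have h1 := hle s₁ s₂ φ
    have h2 := hle s₂ s₃ φ
    linarith
end

section
/- If states s₁ and s₂ of a probabilistic transition system are probabilistic bisimilar, then ⟦φ⟧_δ(s₁) = ⟦φ⟧_δ(s₂) for every formula φ of the logic L and every discount factor δ ∈ (0,1]. -/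
open scoped Classical
open Finset

variable {S : Type} [Fintype S]

lemma bisim_sum_eq {S : Type} [Fintype S] (M : PTS S) (R : S → S → Prop)
    (hR : IsBisim M R) (g : S → ℝ) (hg : ∀ a b, R a b → g a = g b)
    (s₁ s₂ : S) (h12 : R s₁ s₂) :
    ∑ s, M.prob s₁ s * g s = ∑ s, M.prob s₂ s * g s := by
  classical
  obtain ⟨hEq, hB⟩ := hR
  let sd : Setoid S := ⟨R, hEq⟩
  have key : ∀ t : S, ∑ s, M.prob t s * g s =
      ∑ q : Quotient sd, g q.out * (∑ s, if R q.out s then M.prob t s else 0) := by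
    intro t
    rw [← Finset.sum_fiberwise (Finset.univ) (fun s => (⟦s⟧ : Quotient sd))
      (fun s => M.prob t s * g s)]
    apply Finset.sum_congr rfl
    intro q _
    have hmem : ∀ s : S, (⟦s⟧ : Quotient sd) = q ↔ R q.out s := by
      intro s
      constructor
      · intro hs
        have : (⟦s⟧ : Quotient sd) = ⟦q.out⟧ := by rw [hs, Quotient.out_eq]
        exact hEq.symm (Quotient.exact this)
      · intro hs
        have : (⟦q.out⟧ : Quotient sd) = ⟦s⟧ := Quotient.sound hs
        rw [← this, Quotient.out_eq]
    simp only [Finset.mul_sum, mul_ite, mul_zero]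
    rw [← Finset.sum_filter]
    apply Finset.sum_congr
    · ext s; simp [hmem s]
    · intro s hs
      simp only [Finset.mem_filter, Finset.mem_univ, true_and] at hs
      rw [hg q.out s hs, mul_comm]
  rw [key s₁, key s₂]
  apply Finset.sum_congr rfl
  intro q _
  rw [hB s₁ s₂ h12 q.out]

/-- probabilistic bisimilar states satisfy `⟦φ⟧_δ(s₁) = ⟦φ⟧_δ(s₂)`
for every formula `φ` and every discount factor `δ ∈ (0,1]`. -/
theorem stmt2 (S : Type) [Fintype S] (M : PTS S) (s₁ s₂ : S) (h : Bisimilar M s₁ s₂)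
    (δ : ℝ) (hδ : 0 < δ ∧ δ ≤ 1) (φ : Formula) :
    interp M δ φ s₁ = interp M δ φ s₂ := by
  obtain ⟨R, hR, h12⟩ := h
  induction φ generalizing s₁ s₂ with
  | tt => rfl
  | diam φ ih =>
    simp only [interp]
    congr 1
    exact bisim_sum_eq M R hR (interp M δ φ) (fun a b hab => ih a b hab) s₁ s₂ h12
  | conj φ ψ ihφ ihψ =>
    simp only [interp, ihφ s₁ s₂ h12, ihψ s₁ s₂ h12]
  | neg φ ih => simp only [interp, ih s₁ s₂ h12]
  | sub φ q ih => simp only [interp, ih s₁ s₂ h12]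
end

section
/- For every probabilistic transition system ⟨S, π⟩ and every discount factor δ ∈ (0,1], two states s₁, s₂ ∈ S satisfy d_δ(s₁,s₂) = 0 if and only if s₁ and s₂ are probabilistic bisimilar. -/
/-!
Since `L` is closed under negation, `d_δ(s₁,s₂) = 0` says exactly that `s₁` and `s₂`
satisfy every formula to the same degree. Bisimilar states do, because `◇φ` only sees the
mass a state sends to each equivalence class. Conversely, if `s₁` and `s₂` agree on all
formulas, then logical equivalence is itself a bisimulation: for any state `e` the formulas
`φ ⊖ q` separate `e` from each inequivalent state, and their conjunction `χ` is a positive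
multiple of the indicator of the class of `e`, so `◇χ` measures the mass sent to that class.
-/

open scoped Classical
open Finset

variable {S : Type} [Fintype S]

lemma PTS.sum_prob_le_one (M : PTS S) (s : S) : ∑ s', M.prob s s' ≤ 1 := by
  rcases M.sum01 s with h | h <;> rw [h]
  exact zero_le_one

lemma interp_mem_Icc (M : PTS S) {δ : ℝ} (hδ0 : 0 ≤ δ) (hδ1 : δ ≤ 1) (φ : Formula) (s : S) :
    interp M δ φ s ∈ Set.Icc 0 1 := by
  induction φ generalizing s with
  | tt => simp [interp]
  | diam φ ih =>
    have hsum_nonneg : 0 ≤ ∑ s', M.prob s s' * interp M δ φ s' :=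
      sum_nonneg fun t _ => mul_nonneg (M.nonneg s t) (ih t).1
    have hsum_le : ∑ s', M.prob s s' * interp M δ φ s' ≤ 1 :=
      calc ∑ s', M.prob s s' * interp M δ φ s'
          ≤ ∑ s', M.prob s s' :=
            sum_le_sum fun t _ => mul_le_of_le_one_right (M.nonneg s t) (ih t).2
        _ ≤ 1 := M.sum_prob_le_one s
    exact ⟨mul_nonneg hδ0 hsum_nonneg, mul_le_one₀ hδ1 hsum_nonneg hsum_le⟩
  | conj φ ψ ihφ ihψ => exact ⟨le_min (ihφ s).1 (ihψ s).1, min_le_of_left_le (ihφ s).2⟩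
  | neg φ ih =>
    simp only [interp, Set.mem_Icc]
    constructor <;> linarith [(ih s).1, (ih s).2]
  | sub φ q ih =>
    have hq : (0 : ℝ) ≤ (q : ℚ) := by exact_mod_cast q.2.1
    exact ⟨le_max_right _ _, max_le (by linarith [(ih s).2]) zero_le_one⟩

def LogicallyEquivalent (M : PTS S) (δ : ℝ) (a b : S) : Prop :=
  ∀ φ : Formula, interp M δ φ a = interp M δ φ b

lemma logicallyEquivalent_equivalence (M : PTS S) (δ : ℝ) :
    Equivalence (LogicallyEquivalent M δ) :=
  ⟨fun _ _ => rfl, fun h φ => (h φ).symm, fun h₁ h₂ φ => (h₁ φ).trans (h₂ φ)⟩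

lemma pdist_eq_zero_iff (M : PTS S) {δ : ℝ} (hδ0 : 0 ≤ δ) (hδ1 : δ ≤ 1) {a b : S} :
    pdist M δ a b = 0 ↔ LogicallyEquivalent M δ a b := by
  constructor
  · intro h φ
    have hbdd : BddAbove (Set.range fun ψ => interp M δ ψ a - interp M δ ψ b) := by
      refine ⟨1, ?_⟩
      rintro _ ⟨ψ, rfl⟩
      linarith [(interp_mem_Icc M hδ0 hδ1 ψ a).2, (interp_mem_Icc M hδ0 hδ1 ψ b).1]
    have hle (ψ : Formula) : interp M δ ψ a - interp M δ ψ b ≤ 0 := h ▸ le_ciSup hbdd ψ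
    have hneg : (1 - interp M δ φ a) - (1 - interp M δ φ b) ≤ 0 := hle (.neg φ)
    linarith [hle φ]
  · intro h
    simp [pdist, show ∀ φ, interp M δ φ a = interp M δ φ b from h]

lemma IsBisim.sum_prob_mul_eq {M : PTS S} {R : S → S → Prop} (hR : IsBisim M R) {a b : S}
    (hab : R a b) (v : S → ℝ) (hv : ∀ x y, R x y → v x = v y) :
    ∑ s, M.prob a s * v s = ∑ s, M.prob b s * v s := by
  let st : Setoid S := ⟨R, hR.1⟩
  have hclass (u : S) : ∑ s, M.prob u s * v s
      = ∑ c : Quotient st, v c.out * ∑ s, if R c.out s then M.prob u s else 0 := by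
    rw [← sum_fiberwise univ (Quotient.mk st) fun s => M.prob u s * v s]
    refine sum_congr rfl fun c _ => ?_
    rw [mul_sum, sum_filter]
    refine sum_congr rfl fun s _ => ?_
    have hmem : Quotient.mk st s = c ↔ R c.out s :=
      Quotient.mk_eq_iff_out.trans ⟨hR.1.symm, hR.1.symm⟩
    by_cases hs : R c.out s
    · rw [if_pos (hmem.2 hs), if_pos hs, hv _ _ hs, mul_comm]
    · rw [if_neg (mt hmem.1 hs), if_neg hs, mul_zero]
  rw [hclass a, hclass b]
  exact sum_congr rfl fun c _ => by rw [hR.2 a b hab c.out]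

lemma IsBisim.logicallyEquivalent {M : PTS S} {R : S → S → Prop} (hR : IsBisim M R) (δ : ℝ)
    {a b : S} (hab : R a b) : LogicallyEquivalent M δ a b := by
  intro φ
  induction φ generalizing a b with
  | tt => rfl
  | diam φ ih => exact congrArg (δ * ·) (hR.sum_prob_mul_eq hab _ fun x y => ih)
  | conj φ ψ ihφ ihψ => exact congrArg₂ min (ihφ hab) (ihψ hab)
  | neg φ ih => exact congrArg (1 - ·) (ih hab)
  | sub φ q ih => exact congrArg (max · 0) (congrArg (· - _) (ih hab))

lemma exists_formula_pos_eq_zero (M : PTS S) {δ : ℝ} (hδ0 : 0 ≤ δ) (hδ1 : δ ≤ 1) {e t : S}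
    (h : ¬ LogicallyEquivalent M δ e t) :
    ∃ ψ : Formula, 0 < interp M δ ψ e ∧ interp M δ ψ t = 0 := by
  obtain ⟨φ, hφ⟩ : ∃ φ : Formula, interp M δ φ t < interp M δ φ e := by
    obtain ⟨φ, hne⟩ := not_forall.1 h
    rcases lt_or_gt_of_ne hne with hlt | hgt
    · exact ⟨.neg φ, by simp only [interp]; linarith⟩
    · exact ⟨φ, hgt⟩
  obtain ⟨q, hqt, hqe⟩ := exists_rat_btwn hφ
  have hq0 : (0 : ℚ) ≤ q := by exact_mod_cast (interp_mem_Icc M hδ0 hδ1 φ t).1.trans hqt.le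
  have hq1 : q ≤ (1 : ℚ) := by exact_mod_cast hqe.le.trans (interp_mem_Icc M hδ0 hδ1 φ e).2
  refine ⟨.sub φ ⟨q, hq0, hq1⟩, ?_, ?_⟩
  · simp only [interp, lt_max_iff]
    left
    linarith
  · simp only [interp, max_eq_right_iff]
    linarith

def Formula.bigConj (L : List Formula) : Formula := L.foldr .conj .tt

lemma interp_bigConj_pos (M : PTS S) (δ : ℝ) {L : List Formula} {s : S}
    (h : ∀ φ ∈ L, 0 < interp M δ φ s) : 0 < interp M δ (Formula.bigConj L) s := by
  induction L with
  | nil => exact zero_lt_one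
  | cons φ L ih =>
    exact lt_min (h φ List.mem_cons_self) (ih fun ψ hψ => h ψ (List.mem_cons_of_mem φ hψ))

lemma interp_bigConj_le (M : PTS S) (δ : ℝ) {L : List Formula} {φ : Formula} (hφ : φ ∈ L)
    (s : S) : interp M δ (Formula.bigConj L) s ≤ interp M δ φ s := by
  induction L with
  | nil => cases hφ
  | cons ψ L ih =>
    rcases List.mem_cons.1 hφ with rfl | hφL
    · exact min_le_left _ _
    · exact (min_le_right _ _).trans (ih hφL)

lemma exists_formula_supported_on_class (M : PTS S) {δ : ℝ} (hδ0 : 0 ≤ δ) (hδ1 : δ ≤ 1)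
    (e : S) : ∃ χ : Formula, 0 < interp M δ χ e ∧
      ∀ t, ¬ LogicallyEquivalent M δ e t → interp M δ χ t = 0 := by
  have hsep (t : S) : ∃ ψ : Formula, 0 < interp M δ ψ e ∧
      (¬ LogicallyEquivalent M δ e t → interp M δ ψ t = 0) := by
    by_cases ht : LogicallyEquivalent M δ e t
    -- `true` is a harmless conjunct, so the conjunction may range over all states
    · exact ⟨.tt, zero_lt_one, fun h => absurd ht h⟩
    · obtain ⟨ψ, hpos, hzero⟩ := exists_formula_pos_eq_zero M hδ0 hδ1 ht
      exact ⟨ψ, hpos, fun _ => hzero⟩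
  choose ψ hψpos hψzero using hsep
  have hmem (t : S) : ψ t ∈ univ.toList.map ψ := List.mem_map_of_mem (mem_toList.2 (mem_univ t))
  refine ⟨Formula.bigConj (univ.toList.map ψ), ?_, fun t ht => ?_⟩
  · refine interp_bigConj_pos M δ fun φ hφ => ?_
    obtain ⟨t, -, rfl⟩ := List.mem_map.1 hφ
    exact hψpos t
  · refine le_antisymm ?_ (interp_mem_Icc M hδ0 hδ1 _ t).1
    exact (interp_bigConj_le M δ (hmem t) t).trans (hψzero t ht).le

lemma isBisim_logicallyEquivalent (M : PTS S) {δ : ℝ} (hδ0 : 0 < δ) (hδ1 : δ ≤ 1) :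
    IsBisim M (LogicallyEquivalent M δ) := by
  refine ⟨logicallyEquivalent_equivalence M δ, fun a b hab e => ?_⟩
  obtain ⟨χ, hχe, hχzero⟩ := exists_formula_supported_on_class M hδ0.le hδ1 e
  have hχ (s : S) :
      interp M δ χ s = if LogicallyEquivalent M δ e s then interp M δ χ e else 0 := by
    split_ifs with hs
    · exact (hs χ).symm
    · exact hχzero s hs
  have hdiam (u : S) : interp M δ (.diam χ) u
      = δ * interp M δ χ e * ∑ s, if LogicallyEquivalent M δ e s then M.prob u s else 0 := by
    rw [mul_assoc, mul_sum _ _ (interp M δ χ e)]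
    refine congrArg (δ * ·) (sum_congr rfl fun s _ => ?_)
    rw [hχ s]
    split_ifs <;> ring
  have hab_diam := hab (.diam χ)
  rw [hdiam a, hdiam b] at hab_diam
  exact mul_left_cancel₀ (mul_pos hδ0 hχe).ne' hab_diam

/-- `d_δ(s₁,s₂) = 0` iff `s₁` and `s₂` are probabilistic bisimilar. -/
theorem stmt3 (S : Type) [Fintype S] (M : PTS S) (δ : ℝ) (hδ : 0 < δ ∧ δ ≤ 1)
    (s₁ s₂ : S) :
    pdist M δ s₁ s₂ = 0 ↔ Bisimilar M s₁ s₂ := by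
  rw [pdist_eq_zero_iff M hδ.1.le hδ.2]
  constructor
  · exact fun h => ⟨_, isBisim_logicallyEquivalent M hδ.1 hδ.2, h⟩
  · rintro ⟨R, hR, h⟩
    exact hR.logicallyEquivalent δ h
end

section
/- Let ⟨S, π⟩ be a probabilistic transition system and d a 1-bounded pseudometric on S. Then Δ(d) is a 1-bounded pseudometric on S, where Δ(d)(s₁,s₂) is the maximum over all d-nonexpansive f : S → [0,1] of ∑_{s∈S} f(s)·(π(s₁,s) − π(s₂,s)) when both s₁ and s₂ have outgoing transitions, 0 when neither has outgoing transitions, and 1 otherwise. -/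
open scoped Classical
open Finset

variable {S : Type} [Fintype S]

section Aux

variable {S : Type} [Fintype S]

/-- The set appearing in the first branch of `Delta`. -/
def DSet (M : PTS S) (d : S → S → ℝ) (s₁ s₂ : S) : Set ℝ :=
  {x : ℝ | ∃ f : S → ℝ, Nonexp d f ∧ x = ∑ s, f s * (M.prob s₁ s - M.prob s₂ s)}

lemma zero_mem_DSet (M : PTS S) (d : S → S → ℝ) (hd : ∀ a b, 0 ≤ d a b) (s₁ s₂ : S) :
    (0 : ℝ) ∈ DSet M d s₁ s₂ :=
  ⟨fun _ => 0, ⟨fun _ => ⟨le_rfl, zero_le_one⟩, fun a b => by simpa using hd a b⟩, by simp⟩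

lemma DSet_ub (M : PTS S) (d : S → S → ℝ) (s₁ s₂ : S) :
    ∀ x ∈ DSet M d s₁ s₂, x ≤ ∑ s, M.prob s₁ s := by
  rintro x ⟨f, hf, rfl⟩
  apply Finset.sum_le_sum
  intro s _
  calc f s * (M.prob s₁ s - M.prob s₂ s) ≤ f s * M.prob s₁ s := by
        exact mul_le_mul_of_nonneg_left (by linarith [M.nonneg s₂ s]) (hf.1 s).1
    _ ≤ 1 * M.prob s₁ s := mul_le_mul_of_nonneg_right (hf.1 s).2 (M.nonneg s₁ s)
    _ = M.prob s₁ s := one_mul _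

lemma DSet_bdd (M : PTS S) (d : S → S → ℝ) (s₁ s₂ : S) :
    BddAbove (DSet M d s₁ s₂) :=
  ⟨∑ s, M.prob s₁ s, DSet_ub M d s₁ s₂⟩

lemma Delta_eq_sSup (M : PTS S) (d : S → S → ℝ) {s₁ s₂ : S}
    (h1 : (∑ s, M.prob s₁ s) = 1) (h2 : (∑ s, M.prob s₂ s) = 1) :
    Delta M d s₁ s₂ = sSup (DSet M d s₁ s₂) := by
  rw [Delta, if_pos ⟨h1, h2⟩]; rfl

lemma Delta_eq_zero' (M : PTS S) (d : S → S → ℝ) {s₁ s₂ : S}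
    (h1 : (∑ s, M.prob s₁ s) = 0) (h2 : (∑ s, M.prob s₂ s) = 0) :
    Delta M d s₁ s₂ = 0 := by
  rw [Delta, if_neg (by rintro ⟨a, -⟩; rw [h1] at a; norm_num at a), if_pos ⟨h1, h2⟩]

lemma Delta_eq_one₁ (M : PTS S) (d : S → S → ℝ) {s₁ s₂ : S}
    (h1 : (∑ s, M.prob s₁ s) = 1) (h2 : (∑ s, M.prob s₂ s) = 0) :
    Delta M d s₁ s₂ = 1 := by
  rw [Delta, if_neg (by rintro ⟨-, a⟩; rw [h2] at a; norm_num at a),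
    if_neg (by rintro ⟨a, -⟩; rw [h1] at a; norm_num at a)]

lemma Delta_eq_one₂ (M : PTS S) (d : S → S → ℝ) {s₁ s₂ : S}
    (h1 : (∑ s, M.prob s₁ s) = 0) (h2 : (∑ s, M.prob s₂ s) = 1) :
    Delta M d s₁ s₂ = 1 := by
  rw [Delta, if_neg (by rintro ⟨a, -⟩; rw [h1] at a; norm_num at a),
    if_neg (by rintro ⟨-, a⟩; rw [h2] at a; norm_num at a)]

lemma sSup_nonneg' (M : PTS S) (d : S → S → ℝ) (hd : ∀ a b, 0 ≤ d a b) (s₁ s₂ : S) :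
    0 ≤ sSup (DSet M d s₁ s₂) :=
  le_csSup (DSet_bdd M d s₁ s₂) (zero_mem_DSet M d hd s₁ s₂)

lemma sSup_le_one' (M : PTS S) (d : S → S → ℝ) (hd : ∀ a b, 0 ≤ d a b) {s₁ : S} (s₂ : S)
    (h1 : (∑ s, M.prob s₁ s) = 1) : sSup (DSet M d s₁ s₂) ≤ 1 := by
  refine csSup_le ⟨_, ⟨fun _ => 0, ⟨fun _ => ⟨le_rfl, zero_le_one⟩,
    fun a b => by simpa using hd a b⟩, rfl⟩⟩ ?_
  intro x hx
  exact (DSet_ub M d s₁ s₂ x hx).trans_eq h1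

lemma DSet_symm (M : PTS S) (d : S → S → ℝ) {s₁ s₂ : S}
    (h1 : (∑ s, M.prob s₁ s) = 1) (h2 : (∑ s, M.prob s₂ s) = 1) :
    DSet M d s₁ s₂ ⊆ DSet M d s₂ s₁ := by
  rintro x ⟨f, hf, rfl⟩
  refine ⟨fun s => 1 - f s, ⟨fun s => ⟨show (0:ℝ) ≤ 1 - f s by linarith [(hf.1 s).2],
      show (1:ℝ) - f s ≤ 1 by linarith [(hf.1 s).1]⟩,
    fun a b => by simpa [abs_sub_comm] using hf.2 a b⟩, ?_⟩
  have : ∀ s, (1 - f s) * (M.prob s₂ s - M.prob s₁ s) =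
      (M.prob s₂ s - M.prob s₁ s) - f s * (M.prob s₂ s - M.prob s₁ s) := fun s => by ring
  simp only [this, Finset.sum_sub_distrib, Finset.sum_sub_distrib, h1, h2]
  have : ∀ s, f s * (M.prob s₂ s - M.prob s₁ s) = -(f s * (M.prob s₁ s - M.prob s₂ s)) :=
    fun s => by ring
  simp only [this, Finset.sum_neg_distrib]
  ring

end Aux

/-- `Δ(d)` is a 1-bounded pseudometric on `S`. -/
theorem stmt6 (S : Type) [Fintype S] (M : PTS S) (d : S → S → ℝ) (hd : IsPseudo d) :
    IsPseudo (Delta M d) := by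
  obtain ⟨hb, hrefl, hsymm, htri⟩ := hd
  have hdnn : ∀ a b, 0 ≤ d a b := fun a b => (hb a b).1
  -- bounds
  have bounds : ∀ s₁ s₂, 0 ≤ Delta M d s₁ s₂ ∧ Delta M d s₁ s₂ ≤ 1 := by
    intro s₁ s₂
    rcases M.sum01 s₁ with h1 | h1 <;> rcases M.sum01 s₂ with h2 | h2
    · rw [Delta_eq_zero' M d h1 h2]; norm_num
    · rw [Delta_eq_one₂ M d h1 h2]; norm_num
    · rw [Delta_eq_one₁ M d h1 h2]; norm_num
    · rw [Delta_eq_sSup M d h1 h2]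
      exact ⟨sSup_nonneg' M d hdnn s₁ s₂, sSup_le_one' M d hdnn s₂ h1⟩
  refine ⟨bounds, ?_, ?_, ?_⟩
  · -- reflexivity
    intro s
    rcases M.sum01 s with h | h
    · exact Delta_eq_zero' M d h h
    · rw [Delta_eq_sSup M d h h]
      apply le_antisymm
      · refine csSup_le ⟨0, zero_mem_DSet M d hdnn s s⟩ ?_
        rintro x ⟨f, hf, rfl⟩
        simp
      · exact sSup_nonneg' M d hdnn s s
  · -- symmetry
    intro s₁ s₂
    rcases M.sum01 s₁ with h1 | h1 <;> rcases M.sum01 s₂ with h2 | h2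
    · rw [Delta_eq_zero' M d h1 h2, Delta_eq_zero' M d h2 h1]
    · rw [Delta_eq_one₂ M d h1 h2, Delta_eq_one₁ M d h2 h1]
    · rw [Delta_eq_one₁ M d h1 h2, Delta_eq_one₂ M d h2 h1]
    · rw [Delta_eq_sSup M d h1 h2, Delta_eq_sSup M d h2 h1]
      exact le_antisymm (csSup_le_csSup (DSet_bdd M d s₂ s₁)
          ⟨0, zero_mem_DSet M d hdnn s₁ s₂⟩ (DSet_symm M d h1 h2))
        (csSup_le_csSup (DSet_bdd M d s₁ s₂)
          ⟨0, zero_mem_DSet M d hdnn s₂ s₁⟩ (DSet_symm M d h2 h1))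
  · -- triangle inequality
    intro s₁ s₂ s₃
    rcases M.sum01 s₁ with h1 | h1 <;> rcases M.sum01 s₂ with h2 | h2 <;>
      rcases M.sum01 s₃ with h3 | h3
    · rw [Delta_eq_zero' M d h1 h3, Delta_eq_zero' M d h1 h2, Delta_eq_zero' M d h2 h3]
      norm_num
    · rw [Delta_eq_one₂ M d h1 h3, Delta_eq_zero' M d h1 h2, Delta_eq_one₂ M d h2 h3]
      norm_num
    · rw [Delta_eq_zero' M d h1 h3, Delta_eq_one₂ M d h1 h2, Delta_eq_one₁ M d h2 h3]
      norm_num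
    · rw [Delta_eq_one₂ M d h1 h3, Delta_eq_one₂ M d h1 h2, Delta_eq_sSup M d h2 h3]
      have := sSup_nonneg' M d hdnn s₂ s₃
      linarith
    · rw [Delta_eq_one₁ M d h1 h3, Delta_eq_one₁ M d h1 h2, Delta_eq_zero' M d h2 h3]
      norm_num
    · rw [Delta_eq_sSup M d h1 h3, Delta_eq_one₁ M d h1 h2, Delta_eq_one₂ M d h2 h3]
      have := sSup_le_one' M d hdnn s₃ h1
      linarith
    · rw [Delta_eq_one₁ M d h1 h3, Delta_eq_sSup M d h1 h2, Delta_eq_one₁ M d h2 h3]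
      have := sSup_nonneg' M d hdnn s₁ s₂
      linarith
    · rw [Delta_eq_sSup M d h1 h3, Delta_eq_sSup M d h1 h2, Delta_eq_sSup M d h2 h3]
      refine csSup_le ⟨0, zero_mem_DSet M d hdnn s₁ s₃⟩ ?_
      rintro x ⟨f, hf, rfl⟩
      have key : (∑ s, f s * (M.prob s₁ s - M.prob s₃ s)) =
          (∑ s, f s * (M.prob s₁ s - M.prob s₂ s)) +
          (∑ s, f s * (M.prob s₂ s - M.prob s₃ s)) := by
        rw [← Finset.sum_add_distrib]
        exact Finset.sum_congr rfl fun s _ => by ring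
      rw [key]
      exact add_le_add (le_csSup (DSet_bdd M d s₁ s₂) ⟨f, hf, rfl⟩)
        (le_csSup (DSet_bdd M d s₂ s₃) ⟨f, hf, rfl⟩)
end

section
/- Let d be any 1-bounded pseudometric on the state set of a probabilistic transition system that is a post-fixed point of Δ (that is, Δ(d)(s₁,s₂) ≤ d(s₁,s₂) for all s₁,s₂). Then for every formula φ of the logic L with discount factor 1 and all states s₁, s₂, ⟦φ⟧(s₁) − ⟦φ⟧(s₂) ≤ d(s₁,s₂); hence d₁(s₁,s₂) ≤ d(s₁,s₂) for all s₁,s₂. -/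
open scoped Classical
open Finset

variable {S : Type} [Fintype S]

/-- every post-fixed point `d` of `Δ` satisfies
`⟦φ⟧(s₁) − ⟦φ⟧(s₂) ≤ d(s₁,s₂)` for every formula `φ` (discount factor `1`);
hence `d₁ ≤ d` pointwise. -/
theorem stmt9 (S : Type) [Fintype S] (M : PTS S) (d : S → S → ℝ) (hd : IsPseudo d)
    (hpost : ∀ s₁ s₂, Delta M d s₁ s₂ ≤ d s₁ s₂) :
    (∀ (φ : Formula) (s₁ s₂ : S), interp M 1 φ s₁ - interp M 1 φ s₂ ≤ d s₁ s₂) ∧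
    (∀ s₁ s₂ : S, pdist M 1 s₁ s₂ ≤ d s₁ s₂) := by

  obtain ⟨hb, hrefl, hsym, htri⟩ := hd
  have hbound : ∀ (φ : Formula) (s : S), 0 ≤ interp M 1 φ s ∧ interp M 1 φ s ≤ 1 := by
    intro φ
    induction φ with
    | tt => intro s; simp [interp]
    | diam φ ih =>
      intro s
      simp only [interp, one_mul]
      constructor
      · exact Finset.sum_nonneg fun s' _ => mul_nonneg (M.nonneg s s') (ih s').1
      · calc ∑ s', M.prob s s' * interp M 1 φ s'
            ≤ ∑ s', M.prob s s' := by
              refine Finset.sum_le_sum fun s' _ => ?_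
              nlinarith [(ih s').2, M.nonneg s s']
          _ ≤ 1 := by rcases M.sum01 s with h | h <;> simp [h]
    | conj φ ψ ih1 ih2 =>
      intro s
      exact ⟨le_min (ih1 s).1 (ih2 s).1, min_le_of_left_le (ih1 s).2⟩
    | neg φ ih =>
      intro s
      simp only [interp]
      constructor <;> linarith [(ih s).1, (ih s).2]
    | sub φ q ih =>
      intro s
      simp only [interp]
      refine ⟨le_max_right _ _, max_le ?_ zero_le_one⟩
      have hq : (0:ℝ) ≤ ((q : ℚ) : ℝ) := by exact_mod_cast q.2.1
      linarith [(ih s).2]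
  have key : ∀ (φ : Formula) (s₁ s₂ : S), interp M 1 φ s₁ - interp M 1 φ s₂ ≤ d s₁ s₂ := by
    intro φ
    induction φ with
    | tt => intro s₁ s₂; simpa [interp] using (hb s₁ s₂).1
    | diam φ ih =>
      intro s₁ s₂
      simp only [interp, one_mul]
      have hInonneg : ∀ s', 0 ≤ M.prob s₂ s' * interp M 1 φ s' :=
        fun s' => mul_nonneg (M.nonneg s₂ s') (hbound φ s').1
      have hb2 : (0:ℝ) ≤ ∑ s', M.prob s₂ s' * interp M 1 φ s' :=
        Finset.sum_nonneg fun s' _ => hInonneg s'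
      rcases M.sum01 s₁ with h1 | h1
      · have hz : ∀ s' ∈ Finset.univ, M.prob s₁ s' = 0 :=
          (Finset.sum_eq_zero_iff_of_nonneg (fun s _ => M.nonneg s₁ s)).1 h1
        have ha : ∑ s', M.prob s₁ s' * interp M 1 φ s' = 0 :=
          Finset.sum_eq_zero fun s' hs => by rw [hz s' hs, zero_mul]
        rw [ha]
        linarith [(hb s₁ s₂).1]
      · have ha1 : ∑ s', M.prob s₁ s' * interp M 1 φ s' ≤ 1 := by
          calc ∑ s', M.prob s₁ s' * interp M 1 φ s'
              ≤ ∑ s', M.prob s₁ s' := by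
                refine Finset.sum_le_sum fun s' _ => ?_
                nlinarith [(hbound φ s').2, M.nonneg s₁ s']
            _ = 1 := h1
        rcases M.sum01 s₂ with h2 | h2
        · have hD : Delta M d s₁ s₂ = 1 := by
            unfold Delta
            rw [if_neg, if_neg]
            · rintro ⟨hx, hy⟩; linarith
            · rintro ⟨hx, hy⟩; linarith
          have h1d : (1:ℝ) ≤ d s₁ s₂ := hD ▸ hpost s₁ s₂
          linarith
        · -- both rows sum to 1
          have hne : Nonexp d (interp M 1 φ) := by
            refine ⟨fun s => hbound φ s, fun a b => abs_sub_le_iff.2 ⟨ih a b, ?_⟩⟩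
            have := ih b a
            rwa [hsym b a] at this
          set T := {x : ℝ | ∃ f : S → ℝ, Nonexp d f ∧
            x = ∑ s, f s * (M.prob s₁ s - M.prob s₂ s)} with hT
          have hmem : (∑ s, interp M 1 φ s * (M.prob s₁ s - M.prob s₂ s)) ∈ T :=
            ⟨interp M 1 φ, hne, rfl⟩
          have hbdd : BddAbove T := by
            refine ⟨(Fintype.card S : ℝ), ?_⟩
            rintro x ⟨f, hf, rfl⟩
            calc ∑ s, f s * (M.prob s₁ s - M.prob s₂ s)
                ≤ ∑ _s : S, (1:ℝ) := by
                  refine Finset.sum_le_sum fun s _ => ?_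
                  nlinarith [(hf.1 s).1, (hf.1 s).2, M.le_one s₁ s, M.nonneg s₂ s]
              _ = (Fintype.card S : ℝ) := by simp
          have hle : (∑ s, interp M 1 φ s * (M.prob s₁ s - M.prob s₂ s)) ≤ sSup T :=
            le_csSup hbdd hmem
          have hD : Delta M d s₁ s₂ = sSup T := by
            unfold Delta
            rw [if_pos ⟨h1, h2⟩]
          have heq : (∑ s', M.prob s₁ s' * interp M 1 φ s') -
              (∑ s', M.prob s₂ s' * interp M 1 φ s') =
              ∑ s, interp M 1 φ s * (M.prob s₁ s - M.prob s₂ s) := by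
            rw [← Finset.sum_sub_distrib]
            exact Finset.sum_congr rfl fun s _ => by ring
          have := hpost s₁ s₂
          rw [hD] at this
          linarith
    | conj φ ψ ih1 ih2 =>
      intro s₁ s₂
      simp only [interp]
      rcases min_cases (interp M 1 φ s₂) (interp M 1 ψ s₂) with ⟨he, _⟩ | ⟨he, _⟩ <;>
        rw [he]
      · linarith [min_le_left (interp M 1 φ s₁) (interp M 1 ψ s₁), ih1 s₁ s₂]
      · linarith [min_le_right (interp M 1 φ s₁) (interp M 1 ψ s₁), ih2 s₁ s₂]
    | neg φ ih =>
      intro s₁ s₂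
      simp only [interp]
      have := ih s₂ s₁
      rw [hsym s₂ s₁] at this
      linarith
    | sub φ q ih =>
      intro s₁ s₂
      simp only [interp]
      rcases max_cases (interp M 1 φ s₁ - ((q:ℚ):ℝ)) (0:ℝ) with ⟨he, _⟩ | ⟨he, _⟩ <;>
        rw [he]
      · linarith [le_max_left (interp M 1 φ s₂ - ((q:ℚ):ℝ)) (0:ℝ), ih s₁ s₂]
      · linarith [le_max_right (interp M 1 φ s₂ - ((q:ℚ):ℝ)) (0:ℝ), (hb s₁ s₂).1]
  refine ⟨key, fun s₁ s₂ => ?_⟩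
  exact Real.iSup_le (fun φ => key φ s₁ s₂) (hb s₁ s₂).1
end

section
/- Kantorovich–Rubinstein duality for Δ: let ⟨S, π⟩ be a probabilistic transition system, d a 1-bounded pseudometric on S, and s₁, s₂ ∈ S states with ∑_s π(s₁,s) = 1 and ∑_s π(s₂,s) = 1. Then Δ(d)(s₁,s₂) equals the minimum, over all couplings μ : S × S → [0,1] satisfying ∑_{s_i∈S} μ(s_i,s_j) = π(s₁,s_j) for each s_j and ∑_{s_j∈S} μ(s_i,s_j) = π(s₂,s_i) for each s_i, of ∑_{(s_i,s_j)∈S×S} d(s_i,s_j)·μ(s_i,s_j). -/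
open scoped Classical
open Finset

variable {S : Type} [Fintype S]

/-!
Weak duality: for a coupling `μ`, `∑ f (π₁ - π₂) = ∑ (f j - f i) μ i j ≤ ∑ d μ`.
Strong duality is linear-programming duality: if `w` lies below the cost of every coupling, then
`(π₁, π₂, w)` is outside the closure of the cone of (marginals, cost) of nonnegative plans, and
a functional separating it gives potentials `A j + B i ≤ d i j` with `⟨π₁, A⟩ + ⟨π₂, B⟩ > w`.
The `d`-transform of `B`, shifted to have minimum `0`, is a nonexpansive `f : S → [0,1]` doing
at least as well, since `d` is a 1-bounded pseudometric and `π₁`, `π₂` have equal mass.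
-/

namespace KantorovichRubinstein

structure IsCoupling (π₁ π₂ : S → ℝ) (μ : S → S → ℝ) : Prop where
  nonneg : ∀ i j, 0 ≤ μ i j
  sum_fst : ∀ j, ∑ i, μ i j = π₁ j
  sum_snd : ∀ i, ∑ j, μ i j = π₂ i

def transportCost (d : S → S → ℝ) (μ : S → S → ℝ) : ℝ := ∑ i, ∑ j, d i j * μ i j

variable {d : S → S → ℝ} {π₁ π₂ : S → ℝ} {μ : S → S → ℝ}

theorem isCoupling_mul (hπ₁ : π₁ ∈ stdSimplex ℝ S) (hπ₂ : π₂ ∈ stdSimplex ℝ S) :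
    IsCoupling π₁ π₂ fun i j => π₂ i * π₁ j where
  nonneg i j := mul_nonneg (hπ₂.1 i) (hπ₁.1 j)
  sum_fst j := by rw [← sum_mul, hπ₂.2, one_mul]
  sum_snd i := by rw [← mul_sum, hπ₁.2, mul_one]

theorem IsCoupling.le_one (hμ : IsCoupling π₁ π₂ μ) (hπ₁ : ∀ j, π₁ j ≤ 1) (i j : S) :
    μ i j ≤ 1 :=
  calc μ i j ≤ ∑ i', μ i' j := single_le_sum (fun i' _ => hμ.nonneg i' j) (mem_univ i)
    _ = π₁ j := hμ.sum_fst j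
    _ ≤ 1 := hπ₁ j

theorem IsCoupling.sum_mul_sub_eq (hμ : IsCoupling π₁ π₂ μ) (f : S → ℝ) :
    ∑ s, f s * (π₁ s - π₂ s) = ∑ i, ∑ j, (f j - f i) * μ i j := by
  simp only [mul_sub, sub_mul, sum_sub_distrib, ← hμ.sum_fst, ← hμ.sum_snd, mul_sum]
  rw [sum_comm (f := fun j i => f j * μ i j)]

theorem IsCoupling.sum_mul_sub_le_transportCost (hμ : IsCoupling π₁ π₂ μ) {f : S → ℝ}
    (hf : ∀ s₁ s₂, |f s₁ - f s₂| ≤ d s₁ s₂) :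
    ∑ s, f s * (π₁ s - π₂ s) ≤ transportCost d μ := by
  rw [hμ.sum_mul_sub_eq]
  refine sum_le_sum fun i _ => sum_le_sum fun j _ => mul_le_mul_of_nonneg_right ?_ (hμ.nonneg i j)
  exact (le_abs_self _).trans (abs_sub_comm (f j) (f i) ▸ hf i j)

theorem nonexp_sub_inf' [Nonempty S] (hd : IsPseudo d) {g : S → ℝ}
    (hg : ∀ s₁ s₂, |g s₁ - g s₂| ≤ d s₁ s₂) :
    Nonexp d fun s => g s - univ.inf' univ_nonempty g := by
  obtain ⟨s₀, -, hs₀⟩ := exists_mem_eq_inf' (univ_nonempty (α := S)) g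
  refine ⟨fun s => ⟨sub_nonneg.2 (inf'_le g (mem_univ s)), ?_⟩, fun s₁ s₂ => ?_⟩
  · rw [hs₀]
    exact (le_abs_self _).trans ((hg s s₀).trans (hd.1 s s₀).2)
  · simpa using hg s₁ s₂

theorem sum_sub_const_mul_sub (h : ∑ s, π₁ s = ∑ s, π₂ s) (g : S → ℝ) (c : ℝ) :
    ∑ s, (g s - c) * (π₁ s - π₂ s) = ∑ s, g s * (π₁ s - π₂ s) := by
  simp only [sub_mul (g _), sum_sub_distrib, ← mul_sum, h, sub_self, mul_zero, sub_zero]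

noncomputable def cTransform [Nonempty S] (d : S → S → ℝ) (B : S → ℝ) (j : S) : ℝ :=
  univ.inf' univ_nonempty fun i => d i j - B i

theorem le_cTransform [Nonempty S] {A B : S → ℝ} (hAB : ∀ i j, A j + B i ≤ d i j) (j : S) :
    A j ≤ cTransform d B j :=
  le_inf' _ _ fun i _ => le_sub_iff_add_le.2 (hAB i j)

theorem cTransform_le_neg [Nonempty S] (hd : IsPseudo d) (B : S → ℝ) (i : S) :
    cTransform d B i ≤ -B i := by
  have := inf'_le (fun i' => d i' i - B i') (mem_univ i)
  rwa [hd.2.1 i, zero_sub] at this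

theorem cTransform_le_add [Nonempty S] (hd : IsPseudo d) (B : S → ℝ) (j j' : S) :
    cTransform d B j ≤ cTransform d B j' + d j' j := by
  obtain ⟨i, -, hi⟩ := exists_mem_eq_inf' univ_nonempty fun i => d i j' - B i
  calc cTransform d B j ≤ d i j - B i := inf'_le _ (mem_univ i)
    _ ≤ d i j' - B i + d j' j := by linarith [hd.2.2.2 i j' j]
    _ = cTransform d B j' + d j' j := by rw [cTransform, hi]

theorem abs_cTransform_sub_le [Nonempty S] (hd : IsPseudo d) (B : S → ℝ) (j j' : S) :
    |cTransform d B j - cTransform d B j'| ≤ d j j' := by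
  have := cTransform_le_add hd B j j'
  have := cTransform_le_add hd B j' j
  rw [abs_sub_le_iff]
  constructor <;> linarith [hd.2.2.1 j j']

theorem exists_nonexp_of_potentials [Nonempty S] (hd : IsPseudo d)
    (hπ₁ : π₁ ∈ stdSimplex ℝ S) (hπ₂ : π₂ ∈ stdSimplex ℝ S) {A B : S → ℝ}
    (hAB : ∀ i j, A j + B i ≤ d i j) :
    ∃ f, Nonexp d f ∧ ∑ j, π₁ j * A j + ∑ i, π₂ i * B i ≤ ∑ s, f s * (π₁ s - π₂ s) := by
  set g := cTransform d B
  refine ⟨_, nonexp_sub_inf' hd (abs_cTransform_sub_le hd B), ?_⟩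
  rw [sum_sub_const_mul_sub (hπ₁.2.trans hπ₂.2.symm)]
  calc ∑ j, π₁ j * A j + ∑ i, π₂ i * B i ≤ ∑ j, π₁ j * g j + ∑ i, π₂ i * -g i := by
        gcongr with j _ i _
        · exact hπ₁.1 j
        · exact le_cTransform hAB j
        · exact hπ₂.1 i
        · exact le_neg.1 (cTransform_le_neg hd B i)
    _ = ∑ s, g s * (π₁ s - π₂ s) := by
        simp only [mul_neg, sum_neg_distrib, ← sub_eq_add_neg, ← sum_sub_distrib, ← sub_mul,
          mul_comm (g _)]

theorem apply_prod_eq_sum {ι κ : Type*} [Fintype ι] [Fintype κ]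
    (g : (ι → ℝ) × (κ → ℝ) × ℝ →ₗ[ℝ] ℝ) (x : ι → ℝ) (y : κ → ℝ) (t : ℝ) :
    g (x, y, t) = ∑ j, x j * g (Pi.single j 1, 0, 0) + ∑ i, y i * g (0, Pi.single i 1, 0)
      + t * g (0, 0, 1) := by
  have hxyt : ((x, y, t) : (ι → ℝ) × (κ → ℝ) × ℝ) =
      ∑ j, x j • ((Pi.single j 1, 0, 0) : (ι → ℝ) × (κ → ℝ) × ℝ)
        + ∑ i, y i • ((0, Pi.single i 1, 0) : (ι → ℝ) × (κ → ℝ) × ℝ) + t • (0, 0, 1) := by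
    ext <;> simp [Prod.fst_sum, Prod.snd_sum, Pi.single_apply]
  rw [hxyt]
  simp only [map_add, map_sum, map_smul, smul_eq_mul]

variable (d) in
noncomputable def transportMap : (S → S → ℝ) →ₗ[ℝ] (S → ℝ) × (S → ℝ) × ℝ where
  toFun μ := (fun j => ∑ i, μ i j, fun i => ∑ j, μ i j, transportCost d μ)
  map_add' μ ν := by ext <;> simp [transportCost, sum_add_distrib, mul_add]
  map_smul' c μ := by ext <;> simp [transportCost, mul_sum, mul_left_comm]

theorem transportMap_single (i j : S) :
    transportMap d (Pi.single i (Pi.single j 1)) = (Pi.single j 1, Pi.single i 1, d i j) := by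
  ext <;> simp [transportMap, transportCost, Pi.single_apply, ite_apply, mul_ite]

theorem IsCoupling.transportMap_eq (hμ : IsCoupling π₁ π₂ μ) :
    transportMap d μ = (π₁, π₂, transportCost d μ) := by
  simp [transportMap, funext hμ.sum_fst, funext hμ.sum_snd]

theorem isCoupling_of_transportMap_eq (hμ : 0 ≤ μ) {w : ℝ}
    (h : transportMap d μ = (π₁, π₂, w)) : IsCoupling π₁ π₂ μ ∧ transportCost d μ = w := by
  simp only [transportMap, LinearMap.coe_mk, AddHom.coe_mk, Prod.mk.injEq, funext_iff] at h
  exact ⟨⟨fun i j => hμ i j, h.1, h.2.1⟩, h.2.2⟩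

variable (d) in
noncomputable def transportCone : PointedCone ℝ ((S → ℝ) × (S → ℝ) × ℝ) :=
  (PointedCone.positive ℝ (S → S → ℝ)).map (transportMap d)

/-- Near a point whose first component has mass `1`, the cone only sees plans of mass `< 2`,
a compact family; this is what keeps the point out of the closure. -/
theorem notMem_closure_transportCone (hπ₁ : ∑ j, π₁ j = 1) {w : ℝ}
    (hw : ∀ μ, IsCoupling π₁ π₂ μ → w < transportCost d μ) :
    (π₁, π₂, w) ∉ closure (transportCone d : Set ((S → ℝ) × (S → ℝ) × ℝ)) := by
  set U : Set ((S → ℝ) × (S → ℝ) × ℝ) := {z | ∑ j, z.1 j < 2}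
  have hU : IsOpen U := isOpen_lt (by fun_prop) continuous_const
  have hbox : U ∩ transportCone d ⊆ transportMap d '' Set.Icc 0 2 := by
    rintro _ ⟨hz, μ, hμ, rfl⟩
    refine ⟨μ, ⟨hμ, fun i j => ?_⟩, rfl⟩
    calc μ i j ≤ ∑ i', μ i' j := single_le_sum (fun i' _ => hμ i' j) (mem_univ i)
      _ ≤ ∑ j', ∑ i', μ i' j' :=
          single_le_sum (f := fun j' => ∑ i', μ i' j') (fun j' _ => sum_nonneg fun i' _ => hμ i' j')
            (mem_univ j)
      _ ≤ 2 := hz.le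
  have hclosed : IsClosed (transportMap d '' Set.Icc 0 2) :=
    (isCompact_Icc.image (transportMap d).continuous_of_finiteDimensional).isClosed
  intro hx
  obtain ⟨μ, hμ, hμx⟩ :=
    hclosed.closure_subset_iff.2 hbox (hU.inter_closure ⟨by simp [U, hπ₁], hx⟩)
  obtain ⟨hc, hcost⟩ := isCoupling_of_transportMap_eq hμ.1 hμx
  exact (hw μ hc).ne' hcost

theorem exists_potentials_of_forall_lt_transportCost (hπ₁ : π₁ ∈ stdSimplex ℝ S)
    (hπ₂ : π₂ ∈ stdSimplex ℝ S) {w : ℝ} (hw : ∀ μ, IsCoupling π₁ π₂ μ → w < transportCost d μ) :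
    ∃ A B : S → ℝ, (∀ i j, A j + B i ≤ d i j) ∧ w < ∑ j, π₁ j * A j + ∑ i, π₂ i * B i := by
  obtain ⟨g, hgC, hgx⟩ :=
    ProperCone.hyperplane_separation_point (Submodule.closure (transportCone d))
      (x₀ := (π₁, π₂, w)) (notMem_closure_transportCone hπ₁.2 hw)
  have hg : ∀ μ : S → S → ℝ, 0 ≤ μ → 0 ≤ g (transportMap d μ) :=
    fun μ hμ => hgC _ (subset_closure ⟨μ, hμ, rfl⟩)
  have hdecomp := apply_prod_eq_sum (g : (S → ℝ) × (S → ℝ) × ℝ →ₗ[ℝ] ℝ)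
  simp only [ContinuousLinearMap.coe_coe] at hdecomp
  set a := fun j => g (Pi.single j 1, 0, 0)
  set b := fun i => g (0, Pi.single i 1, 0)
  set s := g (0, 0, 1)
  set V := ∑ j, π₁ j * a j + ∑ i, π₂ i * b i
  have hab : ∀ i j, 0 ≤ a j + b i + s * d i j := by
    intro i j
    have := hg (Pi.single i (Pi.single j 1)) (Pi.single_nonneg.2 (Pi.single_nonneg.2 zero_le_one))
    rw [transportMap_single, hdecomp] at this
    simpa [Pi.single_apply, mul_comm] using this
  rw [hdecomp] at hgx
  -- Some coupling costs more than `w`, so `g` must weigh the cost coordinate positively.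
  have hs : 0 < s := by
    have hμ₀ := isCoupling_mul hπ₁ hπ₂
    have h₀ := hg _ fun i j => hμ₀.nonneg i j
    rw [hμ₀.transportMap_eq, hdecomp] at h₀
    by_contra! hs_nonpos
    nlinarith [hw _ hμ₀]
  refine ⟨fun j => -a j / s, fun i => -b i / s, fun i j => ?_, ?_⟩
  · rw [← add_div, div_le_iff₀ hs]
    linarith [hab i j]
  · have hval : ∑ j, π₁ j * (-a j / s) + ∑ i, π₂ i * (-b i / s) = -V / s := by
      simp only [V, neg_div, mul_neg, sum_neg_distrib, mul_div_assoc', ← sum_div, neg_add, add_div]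
    rw [hval, lt_div_iff₀ hs]
    linarith

theorem sSup_nonexp_eq_sInf_transportCost (hd : IsPseudo d) (hπ₁ : π₁ ∈ stdSimplex ℝ S)
    (hπ₂ : π₂ ∈ stdSimplex ℝ S) :
    sSup {x | ∃ f, Nonexp d f ∧ x = ∑ s, f s * (π₁ s - π₂ s)}
      = sInf (transportCost d '' {μ | IsCoupling π₁ π₂ μ}) := by
  obtain ⟨s, -, -⟩ := exists_ne_zero_of_sum_ne_zero (hπ₁.2 ▸ one_ne_zero : ∑ s, π₁ s ≠ 0)
  have : Nonempty S := ⟨s⟩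
  have hne : (transportCost d '' {μ | IsCoupling π₁ π₂ μ}).Nonempty :=
    ⟨_, _, isCoupling_mul hπ₁ hπ₂, rfl⟩
  have hbdd : BddBelow (transportCost d '' {μ | IsCoupling π₁ π₂ μ}) := by
    refine ⟨0, ?_⟩
    rintro _ ⟨μ, hμ, rfl⟩
    exact sum_nonneg fun i _ => sum_nonneg fun j _ => mul_nonneg (hd.1 i j).1 (hμ.nonneg i j)
  have hzero : Nonexp d 0 :=
    ⟨fun _ => ⟨le_rfl, zero_le_one⟩, fun s₁ s₂ => by simpa using (hd.1 s₁ s₂).1⟩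
  refine csSup_eq_of_forall_le_of_forall_lt_exists_gt ⟨_, 0, hzero, rfl⟩ ?_ fun w hw => ?_
  · rintro _ ⟨f, hf, rfl⟩
    refine le_csInf hne ?_
    rintro _ ⟨μ, hμ, rfl⟩
    exact hμ.sum_mul_sub_le_transportCost hf.2
  · obtain ⟨A, B, hAB, hwAB⟩ := exists_potentials_of_forall_lt_transportCost hπ₁ hπ₂
      fun μ hμ => hw.trans_le (csInf_le hbdd ⟨μ, hμ, rfl⟩)
    obtain ⟨f, hf, hfAB⟩ := exists_nonexp_of_potentials hd hπ₁ hπ₂ hAB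
    exact ⟨_, ⟨f, hf, rfl⟩, hwAB.trans_le hfAB⟩

end KantorovichRubinstein

/-- Kantorovich–Rubinstein duality for `Δ`: for states with outgoing
transitions, `Δ(d)(s₁,s₂)` equals the minimum over all couplings `μ` of
`π(s₁,·)` and `π(s₂,·)` of `∑ d(s_i,s_j)·μ(s_i,s_j)`. -/
theorem stmt11 (S : Type) [Fintype S] (M : PTS S) (d : S → S → ℝ) (hd : IsPseudo d)
    (s₁ s₂ : S) (h₁ : (∑ s, M.prob s₁ s) = 1) (h₂ : (∑ s, M.prob s₂ s) = 1) :
    Delta M d s₁ s₂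
      = sInf {x : ℝ | ∃ μ : S → S → ℝ,
          (∀ i j, 0 ≤ μ i j ∧ μ i j ≤ 1) ∧
          (∀ j, (∑ i, μ i j) = M.prob s₁ j) ∧
          (∀ i, (∑ j, μ i j) = M.prob s₂ i) ∧
          x = ∑ i, ∑ j, d i j * μ i j} := by
  rw [Delta, if_pos ⟨h₁, h₂⟩,
    KantorovichRubinstein.sSup_nonexp_eq_sInf_transportCost hd ⟨M.nonneg s₁, h₁⟩ ⟨M.nonneg s₂, h₂⟩]
  congr 1
  ext x
  constructor
  · rintro ⟨μ, hμ, rfl⟩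
    exact ⟨μ, fun i j => ⟨hμ.nonneg i j, hμ.le_one (M.le_one s₁) i j⟩, hμ.sum_fst, hμ.sum_snd, rfl⟩
  · rintro ⟨μ, hμ, h_fst, h_snd, rfl⟩
    exact ⟨μ, ⟨fun i j => (hμ i j).1, h_fst, h_snd⟩, rfl⟩
end

section
/- Let S be a finite nonempty set and d₁ ⊑ d₂ two 1-bounded pseudometrics on S. Let r : S → S satisfy d₂(s, r(s)) = 0 for all s and r(s) = r(s') whenever d₂(s,s') = 0, let ρ(d₁,d₂) = min { d₂(s₁,s₂)/d₁(s₁,s₂) | d₂(s₁,s₂) > 0 } (minimum of the empty set taken to be 1), and let μ = min { d₁(s₁,s₂) | d₁(s₁,s₂) > 0 } (minimum of the empty set taken to be 1). Then for every d₁-nonexpansive f : S → [0,1] and every s ∈ S, f(s) − ρ(d₁,d₂)·f(r(s)) ≤ ((μ+1)/μ) · max_{s₁',s₂' ∈ S} (d₁(s₁',s₂') − d₂(s₁',s₂')). -/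
open scoped Classical
open Finset

variable {S : Type} [Fintype S]

/-!
Split `f s - ρ f(r s)` as `(f s - f(r s)) + (1 - ρ) f(r s)`. Since `d₂(s, r s) = 0`, the first
term is at most `d₁(s, r s) - d₂(s, r s) ≤ M`, where `M` is the maximal gap `d₁ - d₂`. For the
second, every ratio `d₂/d₁ = 1 - (d₁ - d₂)/d₁` with `d₂ > 0` has `d₁ ≥ μ`, so `ρ ≥ 1 - M/μ`, and
`0 ≤ f ≤ 1` gives `(1 - ρ) f(r s) ≤ M/μ`. Adding up yields `M + M/μ = ((μ + 1)/μ) M`.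
-/

section

variable {X : Type} {d d₁ d₂ : X → X → ℝ}

theorem muMin_pos [Finite X] (d : X → X → ℝ) : 0 < muMin d := by
  unfold muMin
  split_ifs with hne
  · have hfin : {x : ℝ | ∃ a b, 0 < d a b ∧ x = d a b}.Finite :=
      (Set.finite_range fun p : X × X => d p.1 p.2).subset
        (by rintro _ ⟨a, b, -, rfl⟩; exact ⟨(a, b), rfl⟩)
    obtain ⟨a, b, hab, heq⟩ := hne.csInf_mem hfin
    exact heq ▸ hab
  · exact one_pos

theorem muMin_le {a b : X} (hab : 0 < d a b) : muMin d ≤ d a b := by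
  have hne : {x : ℝ | ∃ a b, 0 < d a b ∧ x = d a b}.Nonempty := ⟨d a b, a, b, hab, rfl⟩
  rw [muMin, if_pos hne]
  exact csInf_le ⟨0, by rintro _ ⟨a', b', hpos, rfl⟩; exact hpos.le⟩ ⟨a, b, hab, rfl⟩

theorem le_rho {c : ℝ} (hc : c ≤ 1) (h : ∀ a b, 0 < d₂ a b → c ≤ d₂ a b / d₁ a b) :
    c ≤ rho d₁ d₂ := by
  unfold rho
  split_ifs with hne
  · exact le_csInf hne (by rintro _ ⟨a, b, hab, rfl⟩; exact h a b hab)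
  · exact hc

theorem one_sub_div_muMin_le_rho [Finite X] {M : ℝ} (hle : ple d₁ d₂)
    (hgap : ∀ a b, d₁ a b - d₂ a b ≤ M) (hM : 0 ≤ M) :
    1 - M / muMin d₁ ≤ rho d₁ d₂ := by
  have hμ := muMin_pos d₁
  refine le_rho (sub_le_self _ (div_nonneg hM hμ.le)) fun a b hab => ?_
  have hd₁ : 0 < d₁ a b := hab.trans_le (hle a b)
  have hratio : (d₁ a b - d₂ a b) / d₁ a b ≤ M / muMin d₁ :=
    div_le_div₀ hM (hgap a b) hμ (muMin_le hd₁)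
  calc 1 - M / muMin d₁ ≤ 1 - (d₁ a b - d₂ a b) / d₁ a b := sub_le_sub_left hratio 1
    _ = d₂ a b / d₁ a b := by field_simp; ring

end

theorem stmt14_general (S : Type) [Fintype S] (d₁ d₂ : S → S → ℝ)
    (hle : ple d₁ d₂)
    (r : S → S) (hr₁ : ∀ s, d₂ s (r s) = 0)
    (f : S → ℝ) (hf : Nonexp d₁ f) (s : S) :
    f s - rho d₁ d₂ * f (r s)
      ≤ ((muMin d₁ + 1) / muMin d₁) * ⨆ p : S × S, (d₁ p.1 p.2 - d₂ p.1 p.2) := by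
  set M := ⨆ p : S × S, (d₁ p.1 p.2 - d₂ p.1 p.2)
  set μ := muMin d₁
  have hgap : ∀ a b, d₁ a b - d₂ a b ≤ M := fun a b =>
    le_ciSup (f := fun p : S × S => d₁ p.1 p.2 - d₂ p.1 p.2) (Set.finite_range _).bddAbove (a, b)
  have hM : 0 ≤ M := (sub_nonneg.2 (hle s s)).trans (hgap s s)
  have hμ : 0 < μ := muMin_pos d₁
  have hρ : 1 - M / μ ≤ rho d₁ d₂ := one_sub_div_muMin_le_rho hle hgap hM
  have hfs : f s - f (r s) ≤ M := calc
    f s - f (r s) ≤ d₁ s (r s) := (le_abs_self _).trans (hf.2 s (r s))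
    _ = d₁ s (r s) - d₂ s (r s) := by rw [hr₁, sub_zero]
    _ ≤ M := hgap s (r s)
  obtain ⟨hfr₀, hfr₁⟩ := hf.1 (r s)
  have hfr : (1 - rho d₁ d₂) * f (r s) ≤ M / μ := calc
    (1 - rho d₁ d₂) * f (r s) ≤ M / μ * f (r s) :=
      mul_le_mul_of_nonneg_right (by linarith) hfr₀
    _ ≤ M / μ := mul_le_of_le_one_right (div_nonneg hM hμ.le) hfr₁
  calc f s - rho d₁ d₂ * f (r s) = (f s - f (r s)) + (1 - rho d₁ d₂) * f (r s) := by ring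
    _ ≤ M + M / μ := add_le_add hfs hfr
    _ = (μ + 1) / μ * M := by field_simp

/-- bounding `f − g_f` from above:
`f(s) − ρ(d₁,d₂)·f(r(s)) ≤ ((μ+1)/μ)·max_{s₁',s₂'} (d₁(s₁',s₂') − d₂(s₁',s₂'))`. -/
theorem stmt14 (S : Type) [Fintype S] [Nonempty S] (d₁ d₂ : S → S → ℝ)
    (h₁ : IsPseudo d₁) (h₂ : IsPseudo d₂) (hle : ple d₁ d₂)
    (r : S → S) (hr₁ : ∀ s, d₂ s (r s) = 0)
    (hr₂ : ∀ s s', d₂ s s' = 0 → r s = r s')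
    (f : S → ℝ) (hf : Nonexp d₁ f) (s : S) :
    f s - rho d₁ d₂ * f (r s)
      ≤ ((muMin d₁ + 1) / muMin d₁) * ⨆ p : S × S, (d₁ p.1 p.2 - d₂ p.1 p.2) :=
  stmt14_general S d₁ d₂ hle r hr₁ f hf s
end

section
/- The functional Δ is Lipschitz on comparable pairs: let ⟨S, π⟩ be a probabilistic transition system and d₁ ⊑ d₂ two 1-bounded pseudometrics on S, and let μ = min { d₁(s₁,s₂) | d₁(s₁,s₂) > 0 } (minimum of the empty set taken to be 1). Then for all s₁, s₂ ∈ S, Δ(d₁)(s₁,s₂) − Δ(d₂)(s₁,s₂) ≤ |S| · ((μ+1)/μ) · max_{s₁',s₂' ∈ S} (d₁(s₁',s₂') − d₂(s₁',s₂')). -/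
open scoped Classical
open Finset

variable {S : Type} [Fintype S]

/-- `Δ` is Lipschitz on comparable pairs:
`Δ(d₁)(s₁,s₂) − Δ(d₂)(s₁,s₂) ≤ |S|·((μ+1)/μ)·max_{s₁',s₂'} (d₁(s₁',s₂') − d₂(s₁',s₂'))`. -/
theorem stmt15 (S : Type) [Fintype S] (M : PTS S) (d₁ d₂ : S → S → ℝ)
    (h₁ : IsPseudo d₁) (h₂ : IsPseudo d₂) (hle : ple d₁ d₂) (s₁ s₂ : S) :
    Delta M d₁ s₁ s₂ - Delta M d₂ s₁ s₂
      ≤ (Fintype.card S : ℝ) * ((muMin d₁ + 1) / muMin d₁)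
          * ⨆ p : S × S, (d₁ p.1 p.2 - d₂ p.1 p.2) := by
  classical
  set μ := muMin d₁ with hμdef
  set Ms := ⨆ p : S × S, (d₁ p.1 p.2 - d₂ p.1 p.2) with hMsdef
  have hMub : ∀ a b : S, d₁ a b - d₂ a b ≤ Ms := by
    intro a b
    exact le_ciSup (f := fun p : S × S => d₁ p.1 p.2 - d₂ p.1 p.2)
      (Set.Finite.bddAbove (Set.finite_range _)) ((a, b) : S × S)
  have hM0 : 0 ≤ Ms := by
    have h := hMub s₁ s₁
    rw [h₁.2.1 s₁, h₂.2.1 s₁] at h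
    linarith
  -- μ is positive and is a lower bound for positive values of d₁
  have hTfin : {x : ℝ | ∃ a b, 0 < d₁ a b ∧ x = d₁ a b}.Finite := by
    apply (Set.finite_range (fun p : S × S => d₁ p.1 p.2)).subset
    rintro x ⟨a, b, _, rfl⟩; exact ⟨(a, b), rfl⟩
  have hμ : 0 < μ ∧ ∀ a b : S, 0 < d₁ a b → μ ≤ d₁ a b := by
    rw [hμdef, muMin]
    by_cases hne : {x : ℝ | ∃ a b, 0 < d₁ a b ∧ x = d₁ a b}.Nonempty
    · rw [if_pos hne]
      constructor
      · obtain ⟨a, b, hab, heq⟩ := hne.csInf_mem hTfin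
        rw [heq]; exact hab
      · intro a b hab
        exact csInf_le hTfin.bddBelow ⟨a, b, hab, rfl⟩
    · rw [if_neg hne]
      exact ⟨one_pos, fun a b hab => absurd ⟨d₁ a b, a, b, hab, rfl⟩ hne⟩
  have hμpos : 0 < μ := hμ.1
  have hcard : (1 : ℝ) ≤ (Fintype.card S : ℝ) := by
    have : 0 < Fintype.card S := Fintype.card_pos_iff.mpr ⟨s₁⟩
    exact_mod_cast this
  have hRHS0 : 0 ≤ (Fintype.card S : ℝ) * ((μ + 1) / μ) * Ms := by
    apply mul_nonneg (mul_nonneg (by positivity) _) hM0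
    positivity
  have hRHSge : Ms / μ ≤ (Fintype.card S : ℝ) * ((μ + 1) / μ) * Ms := by
    have h1 : Ms / μ = 1 * ((1 : ℝ) / μ) * Ms := by ring
    rw [h1]
    gcongr
    linarith
  by_cases hc : (∑ s, M.prob s₁ s) = 1 ∧ (∑ s, M.prob s₂ s) = 1
  · simp only [Delta, if_pos hc]
    set B := {x : ℝ | ∃ f : S → ℝ, Nonexp d₂ f ∧
        x = ∑ s, f s * (M.prob s₁ s - M.prob s₂ s)} with hBdef
    -- every value of the sum for a [0,1]-valued f is ≤ 1
    have key : ∀ f : S → ℝ, (∀ s, 0 ≤ f s ∧ f s ≤ 1) →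
        ∑ s, f s * (M.prob s₁ s - M.prob s₂ s) ≤ 1 := by
      intro f hf
      have h2 : ∑ s, f s * (M.prob s₁ s - M.prob s₂ s) ≤ ∑ s, M.prob s₁ s := by
        apply Finset.sum_le_sum
        intro s _
        have hfs := hf s
        have hp1 := M.nonneg s₁ s
        have hp1' := M.le_one s₁ s
        have hp2 := M.nonneg s₂ s
        nlinarith
      rw [hc.1] at h2; exact h2
    have hB0 : (0 : ℝ) ∈ B := by
      refine ⟨fun _ => 0, ⟨fun s => ⟨le_refl 0, zero_le_one⟩, fun a b => ?_⟩, by simp⟩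
      simpa using (h₂.1 a b).1
    have hBbdd : BddAbove B := by
      refine ⟨1, fun x hx => ?_⟩
      obtain ⟨f, hf, rfl⟩ := hx
      exact key f hf.1
    have hsupB0 : 0 ≤ sSup B := le_csSup hBbdd hB0
    rw [sub_le_iff_le_add, add_comm]
    apply Real.sSup_le _ (by linarith)
    rintro x ⟨f, hf, rfl⟩
    set x := ∑ s, f s * (M.prob s₁ s - M.prob s₂ s) with hxdef
    set c := max (1 - Ms / μ) 0 with hcdef
    have hc0 : 0 ≤ c := le_max_right _ _
    have hc1 : c ≤ 1 := by
      apply max_le _ zero_le_one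
      have : 0 ≤ Ms / μ := div_nonneg hM0 hμpos.le
      linarith
    have hcd : ∀ a b : S, c * d₁ a b ≤ d₂ a b := by
      intro a b
      rcases lt_or_ge 0 (d₁ a b) with hpos | hz
      · have hmu : μ ≤ d₁ a b := hμ.2 a b hpos
        have hub := hMub a b
        rcases max_cases (1 - Ms / μ) 0 with ⟨heq, _⟩ | ⟨heq, _⟩
        · rw [hcdef, heq]
          have h3 : Ms ≤ (Ms / μ) * d₁ a b := by
            rw [div_mul_eq_mul_div, le_div_iff₀ hμpos]
            nlinarith
          nlinarith
        · rw [hcdef, heq, zero_mul]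
          exact (h₂.1 a b).1
      · have hd1 : d₁ a b = 0 := le_antisymm hz (h₁.1 a b).1
        rw [hd1, mul_zero]
        exact (h₂.1 a b).1
    have hg : Nonexp d₂ (fun s => c * f s) := by
      constructor
      · intro s
        have hfs := (hf.1 s)
        constructor
        · exact mul_nonneg hc0 hfs.1
        · calc c * f s ≤ 1 * 1 := by
                apply mul_le_mul hc1 hfs.2 hfs.1 zero_le_one
            _ = 1 := by ring
      · intro a b
        have h4 : |c * f a - c * f b| = c * |f a - f b| := by
          rw [← mul_sub, abs_mul, abs_of_nonneg hc0]
        rw [h4]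
        calc c * |f a - f b| ≤ c * d₁ a b :=
              mul_le_mul_of_nonneg_left (hf.2 a b) hc0
          _ ≤ d₂ a b := hcd a b
    have hcx : c * x ∈ B := by
      refine ⟨fun s => c * f s, hg, ?_⟩
      rw [hxdef, Finset.mul_sum]
      apply Finset.sum_congr rfl
      intro s _; ring
    have hcxle : c * x ≤ sSup B := le_csSup hBbdd hcx
    rcases le_or_gt x 0 with hx0 | hx0
    · have : (1 - c) * x ≤ 0 := mul_nonpos_of_nonneg_of_nonpos (by linarith) hx0
      nlinarith
    · have hx1 : x ≤ 1 := key f hf.1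
      have h1c : 1 - c ≤ Ms / μ := by
        have := le_max_left (1 - Ms / μ) 0
        rw [← hcdef] at this
        linarith
      have h5 : (1 - c) * x ≤ Ms / μ := by
        calc (1 - c) * x ≤ (1 - c) * 1 :=
              mul_le_mul_of_nonneg_left hx1 (by linarith)
          _ = 1 - c := by ring
          _ ≤ Ms / μ := h1c
      nlinarith
  · simp only [Delta, if_neg hc]
    have : (if (∑ s, M.prob s₁ s) = 0 ∧ (∑ s, M.prob s₂ s) = 0 then (0:ℝ) else 1) -
        (if (∑ s, M.prob s₁ s) = 0 ∧ (∑ s, M.prob s₂ s) = 0 then (0:ℝ) else 1) = 0 := by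
      ring
    rw [this]
    exact hRHS0
end

section
/- The closure ordinal of Δ is ω: defining d⁰ to be the constant-zero pseudometric, d^{n+1} = Δ(d^n) for each n ∈ ℕ, and d^ω(s₁,s₂) = sup_{n∈ℕ} d^n(s₁,s₂), one has Δ(d^ω) = d^ω. -/
open scoped Classical
open Finset

variable {S : Type} [Fintype S]

section Aux16

variable {S : Type} [Fintype S]

/-- The set appearing in `Delta`. -/
def Tset (M : PTS S) (d : S → S → ℝ) (s₁ s₂ : S) : Set ℝ :=
  {x : ℝ | ∃ f : S → ℝ, Nonexp d f ∧ x = ∑ s, f s * (M.prob s₁ s - M.prob s₂ s)}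

lemma zero_mem_Tset (M : PTS S) {d : S → S → ℝ} (hd : ∀ a b, 0 ≤ d a b) (s₁ s₂ : S) :
    (0 : ℝ) ∈ Tset M d s₁ s₂ := by
  refine ⟨fun _ => 0, ⟨fun s => ⟨le_refl _, zero_le_one⟩, fun a b => by simpa using hd a b⟩, ?_⟩
  simp

lemma Tset_le_one (M : PTS S) (d : S → S → ℝ) (s₁ s₂ : S) :
    ∀ x ∈ Tset M d s₁ s₂, x ≤ 1 := by
  rintro x ⟨f, ⟨hf01, _⟩, rfl⟩
  have h1 : ∑ s, f s * (M.prob s₁ s - M.prob s₂ s)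
      = ∑ s, f s * M.prob s₁ s - ∑ s, f s * M.prob s₂ s := by
    rw [← Finset.sum_sub_distrib]; exact Finset.sum_congr rfl fun s _ => by ring
  have h2 : ∑ s, f s * M.prob s₁ s ≤ ∑ s, M.prob s₁ s :=
    Finset.sum_le_sum fun s _ => mul_le_of_le_one_left (M.nonneg _ _) (hf01 s).2
  have h3 : 0 ≤ ∑ s, f s * M.prob s₂ s :=
    Finset.sum_nonneg fun s _ => mul_nonneg (hf01 s).1 (M.nonneg _ _)
  have h4 : ∑ s, M.prob s₁ s ≤ 1 := by
    rcases M.sum01 s₁ with h | h <;> rw [h]; exact zero_le_one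
  linarith

lemma Tset_bddAbove (M : PTS S) (d : S → S → ℝ) (s₁ s₂ : S) :
    BddAbove (Tset M d s₁ s₂) := ⟨1, fun x hx => Tset_le_one M d s₁ s₂ x hx⟩

lemma delta_eq_sSup (M : PTS S) (d : S → S → ℝ) {s₁ s₂ : S}
    (h₁ : (∑ s, M.prob s₁ s) = 1) (h₂ : (∑ s, M.prob s₂ s) = 1) :
    Delta M d s₁ s₂ = sSup (Tset M d s₁ s₂) := by
  rw [Delta, if_pos ⟨h₁, h₂⟩]; rfl

lemma delta_eq_zero (M : PTS S) (d : S → S → ℝ) {s₁ s₂ : S}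
    (h₁ : (∑ s, M.prob s₁ s) = 0) (h₂ : (∑ s, M.prob s₂ s) = 0) :
    Delta M d s₁ s₂ = 0 := by
  rw [Delta, if_neg, if_pos ⟨h₁, h₂⟩]
  rintro ⟨c₁, -⟩; rw [h₁] at c₁; norm_num at c₁

lemma delta_eq_one (M : PTS S) (d : S → S → ℝ) {s₁ s₂ : S}
    (h : ¬ ((∑ s, M.prob s₁ s) = 1 ∧ (∑ s, M.prob s₂ s) = 1))
    (h' : ¬ ((∑ s, M.prob s₁ s) = 0 ∧ (∑ s, M.prob s₂ s) = 0)) :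
    Delta M d s₁ s₂ = 1 := by
  rw [Delta, if_neg h, if_neg h']

lemma delta_nonneg (M : PTS S) {d : S → S → ℝ} (hd : ∀ a b, 0 ≤ d a b) (s₁ s₂ : S) :
    0 ≤ Delta M d s₁ s₂ := by
  by_cases h : (∑ s, M.prob s₁ s) = 1 ∧ (∑ s, M.prob s₂ s) = 1
  · rw [delta_eq_sSup M d h.1 h.2]
    exact le_csSup (Tset_bddAbove M d s₁ s₂) (zero_mem_Tset M hd s₁ s₂)
  · by_cases h' : (∑ s, M.prob s₁ s) = 0 ∧ (∑ s, M.prob s₂ s) = 0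
    · rw [delta_eq_zero M d h'.1 h'.2]
    · rw [delta_eq_one M d h h']; exact zero_le_one

lemma delta_le_one (M : PTS S) {d : S → S → ℝ} (hd : ∀ a b, 0 ≤ d a b) (s₁ s₂ : S) :
    Delta M d s₁ s₂ ≤ 1 := by
  by_cases h : (∑ s, M.prob s₁ s) = 1 ∧ (∑ s, M.prob s₂ s) = 1
  · rw [delta_eq_sSup M d h.1 h.2]
    exact csSup_le ⟨0, zero_mem_Tset M hd s₁ s₂⟩ (Tset_le_one M d s₁ s₂)
  · by_cases h' : (∑ s, M.prob s₁ s) = 0 ∧ (∑ s, M.prob s₂ s) = 0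
    · rw [delta_eq_zero M d h'.1 h'.2]; exact zero_le_one
    · rw [delta_eq_one M d h h']

lemma delta_mono (M : PTS S) {d d' : S → S → ℝ} (hd : ∀ a b, 0 ≤ d a b)
    (hle : ∀ a b, d a b ≤ d' a b) (s₁ s₂ : S) :
    Delta M d s₁ s₂ ≤ Delta M d' s₁ s₂ := by
  by_cases h : (∑ s, M.prob s₁ s) = 1 ∧ (∑ s, M.prob s₂ s) = 1
  · rw [delta_eq_sSup M d h.1 h.2, delta_eq_sSup M d' h.1 h.2]
    refine csSup_le_csSup (Tset_bddAbove M d' s₁ s₂) ⟨0, zero_mem_Tset M hd s₁ s₂⟩ ?_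
    rintro x ⟨f, ⟨hf01, hfne⟩, rfl⟩
    exact ⟨f, ⟨hf01, fun a b => (hfne a b).trans (hle a b)⟩, rfl⟩
  · by_cases h' : (∑ s, M.prob s₁ s) = 0 ∧ (∑ s, M.prob s₂ s) = 0
    · rw [delta_eq_zero M d h'.1 h'.2, delta_eq_zero M d' h'.1 h'.2]
    · rw [delta_eq_one M d h h', delta_eq_one M d' h h']

end Aux16

section Aux16b

variable {S : Type} [Fintype S]

lemma delta_self (M : PTS S) {d : S → S → ℝ} (hd : ∀ a b, 0 ≤ d a b) (s : S) :
    Delta M d s s = 0 := by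
  by_cases h : (∑ s', M.prob s s') = 1
  · rw [delta_eq_sSup M d h h]
    have : Tset M d s s = {0} := by
      ext x
      constructor
      · rintro ⟨f, -, rfl⟩; simp
      · rintro rfl; exact zero_mem_Tset M hd s s
    rw [this, csSup_singleton]
  · have h0 : (∑ s', M.prob s s') = 0 := (M.sum01 s).resolve_right h
    exact delta_eq_zero M d h0 h0

lemma delta_symm (M : PTS S) {d : S → S → ℝ} (hd : ∀ a b, 0 ≤ d a b) (s₁ s₂ : S) :
    Delta M d s₁ s₂ = Delta M d s₂ s₁ := by
  by_cases h₁ : (∑ s, M.prob s₁ s) = 1 <;> by_cases h₂ : (∑ s, M.prob s₂ s) = 1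
  · rw [delta_eq_sSup M d h₁ h₂, delta_eq_sSup M d h₂ h₁]
    have key : ∀ t₁ t₂ : S, (∑ s, M.prob t₁ s) = 1 → (∑ s, M.prob t₂ s) = 1 →
        Tset M d t₁ t₂ ⊆ Tset M d t₂ t₁ := by
      rintro t₁ t₂ g₁ g₂ x ⟨f, ⟨hf01, hfne⟩, rfl⟩
      refine ⟨fun s => 1 - f s, ⟨fun s => ⟨by dsimp only; linarith [(hf01 s).2], by dsimp only; linarith [(hf01 s).1]⟩,
        fun a b => by rw [show (1 - f a) - (1 - f b) = -(f a - f b) by ring, abs_neg]; exact hfne a b⟩, ?_⟩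
      have : ∀ t : S, ∑ s, (1 - f s) * (M.prob t₂ s - M.prob t₁ s)
          = (∑ s, M.prob t₂ s) - (∑ s, M.prob t₁ s) - ∑ s, f s * (M.prob t₂ s - M.prob t₁ s) := by
        intro t
        rw [← Finset.sum_sub_distrib, ← Finset.sum_sub_distrib]
        exact Finset.sum_congr rfl fun s _ => by ring
      rw [this s₁, g₁, g₂]
      rw [show (1:ℝ) - 1 - ∑ s, f s * (M.prob t₂ s - M.prob t₁ s)
          = ∑ s, -(f s * (M.prob t₂ s - M.prob t₁ s)) by rw [Finset.sum_neg_distrib]; ring]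
      exact Finset.sum_congr rfl fun s _ => by ring
    exact le_antisymm (csSup_le_csSup (Tset_bddAbove M d s₂ s₁) ⟨0, zero_mem_Tset M hd s₁ s₂⟩ (key _ _ h₁ h₂))
      (csSup_le_csSup (Tset_bddAbove M d s₁ s₂) ⟨0, zero_mem_Tset M hd s₂ s₁⟩ (key _ _ h₂ h₁))
  · have z₂ : (∑ s, M.prob s₂ s) = 0 := (M.sum01 s₂).resolve_right h₂
    rw [delta_eq_one M d (fun c => h₂ c.2) (fun c => by rw [c.1] at h₁; norm_num at h₁),
      delta_eq_one M d (fun c => h₂ c.1) (fun c => by rw [c.2] at h₁; norm_num at h₁)]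
  · have z₁ : (∑ s, M.prob s₁ s) = 0 := (M.sum01 s₁).resolve_right h₁
    rw [delta_eq_one M d (fun c => h₁ c.1) (fun c => by rw [c.2] at h₂; norm_num at h₂),
      delta_eq_one M d (fun c => h₁ c.2) (fun c => by rw [c.1] at h₂; norm_num at h₂)]
  · have z₁ : (∑ s, M.prob s₁ s) = 0 := (M.sum01 s₁).resolve_right h₁
    have z₂ : (∑ s, M.prob s₂ s) = 0 := (M.sum01 s₂).resolve_right h₂
    rw [delta_eq_zero M d z₁ z₂, delta_eq_zero M d z₂ z₁]

lemma delta_triangle (M : PTS S) {d : S → S → ℝ} (hd : ∀ a b, 0 ≤ d a b) (s₁ s₂ s₃ : S) :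
    Delta M d s₁ s₃ ≤ Delta M d s₁ s₂ + Delta M d s₂ s₃ := by
  by_cases h₁ : (∑ s, M.prob s₁ s) = 1 <;> by_cases h₂ : (∑ s, M.prob s₂ s) = 1
    <;> by_cases h₃ : (∑ s, M.prob s₃ s) = 1
  -- all three →
  · rw [delta_eq_sSup M d h₁ h₃, delta_eq_sSup M d h₁ h₂, delta_eq_sSup M d h₂ h₃]
    refine csSup_le ⟨0, zero_mem_Tset M hd s₁ s₃⟩ ?_
    rintro x ⟨f, hf, rfl⟩
    have split : ∑ s, f s * (M.prob s₁ s - M.prob s₃ s)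
        = (∑ s, f s * (M.prob s₁ s - M.prob s₂ s)) + ∑ s, f s * (M.prob s₂ s - M.prob s₃ s) := by
      rw [← Finset.sum_add_distrib]; exact Finset.sum_congr rfl fun s _ => by ring
    rw [split]
    exact add_le_add (le_csSup (Tset_bddAbove M d s₁ s₂) ⟨f, hf, rfl⟩)
      (le_csSup (Tset_bddAbove M d s₂ s₃) ⟨f, hf, rfl⟩)
  -- TTF
  · have z₃ : (∑ s, M.prob s₃ s) = 0 := (M.sum01 s₃).resolve_right h₃
    have k : Delta M d s₂ s₃ = 1 := delta_eq_one M d (fun c => h₃ c.2)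
      (fun c => by rw [c.1] at h₂; norm_num at h₂)
    rw [k]; linarith [delta_le_one M hd s₁ s₃, delta_nonneg M hd s₁ s₂]
  -- TFT
  · have k : Delta M d s₁ s₂ = 1 := delta_eq_one M d (fun c => h₂ c.2)
      (fun c => by rw [c.1] at h₁; norm_num at h₁)
    rw [k]; linarith [delta_le_one M hd s₁ s₃, delta_nonneg M hd s₂ s₃]
  -- TFF
  · have k : Delta M d s₁ s₂ = 1 := delta_eq_one M d (fun c => h₂ c.2)
      (fun c => by rw [c.1] at h₁; norm_num at h₁)
    rw [k]; linarith [delta_le_one M hd s₁ s₃, delta_nonneg M hd s₂ s₃]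
  -- FTT
  · have k : Delta M d s₁ s₂ = 1 := delta_eq_one M d (fun c => h₁ c.1)
      (fun c => by rw [c.2] at h₂; norm_num at h₂)
    rw [k]; linarith [delta_le_one M hd s₁ s₃, delta_nonneg M hd s₂ s₃]
  -- FTF
  · have k : Delta M d s₁ s₂ = 1 := delta_eq_one M d (fun c => h₁ c.1)
      (fun c => by rw [c.2] at h₂; norm_num at h₂)
    rw [k]; linarith [delta_le_one M hd s₁ s₃, delta_nonneg M hd s₂ s₃]
  -- FFT
  · have k : Delta M d s₂ s₃ = 1 := delta_eq_one M d (fun c => h₂ c.1)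
      (fun c => by rw [c.2] at h₃; norm_num at h₃)
    rw [k]; linarith [delta_le_one M hd s₁ s₃, delta_nonneg M hd s₁ s₂]
  -- FFF
  · have z₁ : (∑ s, M.prob s₁ s) = 0 := (M.sum01 s₁).resolve_right h₁
    have z₃ : (∑ s, M.prob s₃ s) = 0 := (M.sum01 s₃).resolve_right h₃
    rw [delta_eq_zero M d z₁ z₃]
    linarith [delta_nonneg M hd s₁ s₂, delta_nonneg M hd s₂ s₃]

lemma isPseudo_delta (M : PTS S) {d : S → S → ℝ} (hd : ∀ a b, 0 ≤ d a b) :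
    IsPseudo (Delta M d) :=
  ⟨fun a b => ⟨delta_nonneg M hd a b, delta_le_one M hd a b⟩,
   delta_self M hd, delta_symm M hd, delta_triangle M hd⟩

lemma isPseudo_iterd (M : PTS S) (n : ℕ) : IsPseudo (iterd M n) := by
  induction n with
  | zero => exact ⟨fun a b => ⟨le_refl _, zero_le_one⟩, fun s => rfl, fun a b => rfl,
      fun a b c => by simp [iterd]⟩
  | succ n ih => exact isPseudo_delta M fun a b => (ih.1 a b).1

lemma iterd_mono_succ (M : PTS S) (n : ℕ) (a b : S) :
    iterd M n a b ≤ iterd M (n + 1) a b := by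
  induction n generalizing a b with
  | zero => exact delta_nonneg M (fun a b => le_refl _) a b
  | succ n ih => exact delta_mono M (fun a b => ((isPseudo_iterd M n).1 a b).1) ih a b

lemma iterd_mono (M : PTS S) : ∀ {m n : ℕ}, m ≤ n → ∀ a b : S, iterd M m a b ≤ iterd M n a b := by
  intro m n h a b
  induction h with
  | refl => exact le_refl _
  | step h ih => exact le_trans ih (iterd_mono_succ M _ a b)

end Aux16b

section Aux16c

variable {S : Type} [Fintype S]

/-- The limit metric `d^ω`. -/
noncomputable abbrev dOm (M : PTS S) (a b : S) : ℝ := ⨆ n : ℕ, iterd M n a b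

lemma iterd_nonneg (M : PTS S) (n : ℕ) (a b : S) : 0 ≤ iterd M n a b :=
  ((isPseudo_iterd M n).1 a b).1

lemma iterd_le_one (M : PTS S) (n : ℕ) (a b : S) : iterd M n a b ≤ 1 :=
  ((isPseudo_iterd M n).1 a b).2

lemma bddAbove_range_iterd (M : PTS S) (a b : S) :
    BddAbove (Set.range fun n : ℕ => iterd M n a b) := by
  refine ⟨1, ?_⟩; rintro x ⟨n, rfl⟩; exact iterd_le_one M n a b

lemma iterd_le_dOm (M : PTS S) (n : ℕ) (a b : S) : iterd M n a b ≤ dOm M a b :=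
  le_ciSup (bddAbove_range_iterd M a b) n

lemma dOm_nonneg (M : PTS S) (a b : S) : 0 ≤ dOm M a b :=
  le_trans (iterd_nonneg M 0 a b).ge.le (iterd_le_dOm M 0 a b)

lemma exists_approx (M : PTS S) {ε : ℝ} (hε : 0 < ε) :
    ∃ n : ℕ, ∀ a b : S, dOm M a b ≤ iterd M n a b + ε := by
  have H : ∀ p : S × S, ∃ n : ℕ, dOm M p.1 p.2 - ε < iterd M n p.1 p.2 := by
    intro p
    exact exists_lt_of_lt_ciSup (show dOm M p.1 p.2 - ε < dOm M p.1 p.2 from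
      sub_lt_self _ hε)
  choose g hg using H
  refine ⟨Finset.univ.sup g, fun a b => ?_⟩
  have h1 := hg (a, b)
  have h2 := iterd_mono M (Finset.le_sup (f := g) (Finset.mem_univ (a, b))) a b
  simp only at h1
  linarith

lemma key_le (M : PTS S) (s₁ s₂ : S)
    (h₁ : (∑ s, M.prob s₁ s) = 1) (h₂ : (∑ s, M.prob s₂ s) = 1)
    (f : S → ℝ) (hf : Nonexp (dOm M) f) :
    ∑ s, f s * (M.prob s₁ s - M.prob s₂ s) ≤ dOm M s₁ s₂ := by
  refine le_of_forall_pos_le_add ?_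
  intro ε hε
  obtain ⟨n, hn⟩ := exists_approx M hε
  haveI : Nonempty S := ⟨s₁⟩
  obtain ⟨hbd, hrefl, hsymm, htri⟩ := isPseudo_iterd M n
  set dn : S → S → ℝ := iterd M n with hdn
  set g : S → ℝ := fun s => ⨅ t, (f t + dn s t) with hgdef
  have bddB : ∀ s, BddBelow (Set.range fun t => f t + dn s t) :=
    fun s => (Set.finite_range _).bddBelow
  have g_le : ∀ s, g s ≤ f s := fun s => by
    have h := ciInf_le (bddB s) s
    rw [hrefl s] at h; simpa using h
  have g_ge : ∀ s, f s - ε ≤ g s := fun s => le_ciInf fun t => by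
    have h1 := abs_le.mp (hf.2 s t)
    have h2 := hn s t
    linarith [h1.1, h1.2]
  have g_ne : ∀ a b, g a - dn a b ≤ g b := fun a b =>
    le_ciInf fun t => by
      have h1 := ciInf_le (bddB a) t
      have h3 := htri a b t
      linarith
  have g_abs : ∀ a b, |g a - g b| ≤ dn a b := fun a b => abs_le.mpr
    ⟨by have h := g_ne b a; have hs := hsymm a b; linarith,
     by have h := g_ne a b; linarith⟩
  set g' : S → ℝ := fun s => max (g s) 0 with hg'def
  have hg'ne : Nonexp dn g' :=
    ⟨fun s => ⟨le_max_right _ _, max_le ((g_le s).trans (hf.1 s).2) zero_le_one⟩,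
     fun a b => le_trans (abs_max_sub_max_le_abs _ _ _) (g_abs a b)⟩
  have g'_le_f : ∀ s, g' s ≤ f s := fun s => max_le (g_le s) (hf.1 s).1
  have f_sub : ∀ s, f s - g' s ≤ ε := fun s => by
    have h1 := g_ge s
    have h2 : g s ≤ g' s := le_max_left _ _
    linarith
  have e1 : ∑ s, f s * (M.prob s₁ s - M.prob s₂ s)
      = (∑ s, g' s * (M.prob s₁ s - M.prob s₂ s))
        + ∑ s, (f s - g' s) * (M.prob s₁ s - M.prob s₂ s) := by
    rw [← Finset.sum_add_distrib]; exact Finset.sum_congr rfl fun s _ => by ring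
  have e2 : ∑ s, (f s - g' s) * (M.prob s₁ s - M.prob s₂ s) ≤ ε := by
    calc ∑ s, (f s - g' s) * (M.prob s₁ s - M.prob s₂ s)
        ≤ ∑ s, (f s - g' s) * M.prob s₁ s := by
          refine Finset.sum_le_sum fun s _ => ?_
          have h1 : 0 ≤ f s - g' s := by linarith [g'_le_f s]
          have h2 : M.prob s₁ s - M.prob s₂ s ≤ M.prob s₁ s := by
            linarith [M.nonneg s₂ s]
          exact mul_le_mul_of_nonneg_left h2 h1
      _ ≤ ∑ s, ε * M.prob s₁ s := Finset.sum_le_sum fun s _ =>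
          mul_le_mul_of_nonneg_right (f_sub s) (M.nonneg _ _)
      _ = ε := by rw [← Finset.mul_sum, h₁, mul_one]
  have e3 : ∑ s, g' s * (M.prob s₁ s - M.prob s₂ s) ≤ iterd M (n + 1) s₁ s₂ := by
    show _ ≤ Delta M dn s₁ s₂
    rw [delta_eq_sSup M dn h₁ h₂]
    exact le_csSup (Tset_bddAbove M dn s₁ s₂) ⟨g', hg'ne, rfl⟩
  have e4 := iterd_le_dOm M (n + 1) s₁ s₂
  linarith

end Aux16c

/-- the closure ordinal of `Δ` is `ω`: with `d⁰ = ⊤`, `d^{n+1} = Δ(d^n)`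
and `d^ω(s₁,s₂) = sup_n d^n(s₁,s₂)`, one has `Δ(d^ω) = d^ω`. -/
theorem stmt16 (S : Type) [Fintype S] (M : PTS S) :
    Delta M (fun s₁ s₂ => ⨆ n : ℕ, iterd M n s₁ s₂)
      = fun s₁ s₂ => ⨆ n : ℕ, iterd M n s₁ s₂ := by
  funext s₁ s₂
  show Delta M (dOm M) s₁ s₂ = dOm M s₁ s₂
  by_cases h : (∑ s, M.prob s₁ s) = 1 ∧ (∑ s, M.prob s₂ s) = 1
  · rw [delta_eq_sSup M _ h.1 h.2]
    apply le_antisymm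
    · refine Real.sSup_le ?_ (dOm_nonneg M s₁ s₂)
      rintro x ⟨f, hf, rfl⟩
      exact key_le M s₁ s₂ h.1 h.2 f hf
    · refine ciSup_le fun n => ?_
      cases n with
      | zero =>
        exact le_csSup (Tset_bddAbove M _ s₁ s₂)
          (zero_mem_Tset M (dOm_nonneg M) s₁ s₂)
      | succ n =>
        show Delta M (iterd M n) s₁ s₂ ≤ _
        rw [delta_eq_sSup M _ h.1 h.2]
        refine csSup_le_csSup (Tset_bddAbove M _ s₁ s₂)
          ⟨0, zero_mem_Tset M (iterd_nonneg M n) s₁ s₂⟩ ?_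
        rintro x ⟨f, ⟨hf01, hfne⟩, rfl⟩
        exact ⟨f, ⟨hf01, fun a b => (hfne a b).trans (iterd_le_dOm M n a b)⟩, rfl⟩
  · by_cases h' : (∑ s, M.prob s₁ s) = 0 ∧ (∑ s, M.prob s₂ s) = 0
    · rw [delta_eq_zero M _ h'.1 h'.2]
      have hz : ∀ n : ℕ, iterd M n s₁ s₂ = 0 := fun n => by
        cases n with
        | zero => rfl
        | succ n => exact delta_eq_zero M _ h'.1 h'.2
      simp [dOm, hz]
    · rw [delta_eq_one M _ h h']
      apply le_antisymm
      · have h1 : iterd M 1 s₁ s₂ = 1 := delta_eq_one M _ h h'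
        calc (1 : ℝ) = iterd M 1 s₁ s₂ := h1.symm
          _ ≤ _ := iterd_le_dOm M 1 s₁ s₂
      · exact ciSup_le fun n => iterd_le_one M n s₁ s₂
end

section
/- Let ⟨S, π⟩ be a probabilistic transition system and define the termination probabilities τₙ : S → [0,1] by τ₀(s)=0; τ_{n+1}(s)=1 if s ↛ and τ_{n+1}(s)=∑_{s'∈S} π(s,s')·τₙ(s') otherwise; and τ_ω(s)=sup_{n∈ℕ} τₙ(s). If τ_ω(s₂) = 0, then d₁(s₁,s₂) = τ_ω(s₁), where d₁ is the behavioural pseudometric with discount factor 1. -/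
open scoped Classical
open Finset

variable {S : Type} [Fintype S]

namespace Stmt18Aux

variable {S : Type} [Fintype S]

lemma term_nonneg (M : PTS S) : ∀ n s, 0 ≤ term M n s
  | 0, _ => le_refl 0
  | n+1, s => by
    simp only [term]
    split
    · exact zero_le_one
    · exact Finset.sum_nonneg fun s' _ => mul_nonneg (M.nonneg _ _) (term_nonneg M n s')

lemma term_le_one (M : PTS S) : ∀ n s, term M n s ≤ 1
  | 0, _ => zero_le_one
  | n+1, s => by
    simp only [term]
    split
    · exact le_refl 1
    · calc ∑ s', M.prob s s' * term M n s'
          ≤ ∑ s', M.prob s s' * 1 := Finset.sum_le_sum fun s' _ =>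
            mul_le_mul_of_nonneg_left (term_le_one M n s') (M.nonneg _ _)
        _ = ∑ s', M.prob s s' := by simp
        _ ≤ 1 := by rcases M.sum01 s with h | h <;> rw [h] <;> norm_num

lemma term_mono (M : PTS S) : ∀ n s, term M n s ≤ term M (n+1) s
  | 0, s => term_nonneg M 1 s
  | n+1, s => by
    simp only [term]
    split
    · exact le_refl 1
    · exact Finset.sum_le_sum fun s' _ =>
        mul_le_mul_of_nonneg_left (term_mono M n s') (M.nonneg _ _)

lemma term_bdd (M : PTS S) (s : S) : BddAbove (Set.range fun n => term M n s) :=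
  ⟨1, by rintro x ⟨n, rfl⟩; exact term_le_one M n s⟩

lemma termSup_nonneg (M : PTS S) (s : S) : 0 ≤ ⨆ n, term M n s :=
  le_ciSup (term_bdd M s) 0

lemma sum_termSup_le (M : PTS S) (s : S) :
    ∑ s', M.prob s s' * (⨆ n, term M n s') ≤ ⨆ n, term M n s := by
  by_cases hs : (∑ s', M.prob s s') = 0
  · have hz : ∀ s' ∈ Finset.univ, M.prob s s' = 0 :=
      (Finset.sum_eq_zero_iff_of_nonneg (fun s' _ => M.nonneg s s')).mp hs
    have : ∑ s', M.prob s s' * (⨆ n, term M n s') = 0 :=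
      Finset.sum_eq_zero fun s' hs' => by rw [hz s' hs', zero_mul]
    rw [this]; exact termSup_nonneg M s
  · have hs1 : (∑ s', M.prob s s') = 1 := (M.sum01 s).resolve_left hs
    have hmono : ∀ s' : S, Monotone fun n => term M n s' := fun s' =>
      monotone_nat_of_le_succ fun n => term_mono M n s'
    have htend : Filter.Tendsto (fun n => ∑ s', M.prob s s' * term M n s')
        Filter.atTop (nhds (∑ s', M.prob s s' * (⨆ n, term M n s'))) := by
      apply tendsto_finset_sum
      intro s' _
      exact (tendsto_atTop_ciSup (hmono s') (term_bdd M s')).const_mul _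
    refine le_of_tendsto htend (Filter.Eventually.of_forall fun n => ?_)
    have : ∑ s', M.prob s s' * term M n s' = term M (n+1) s := by
      simp only [term, if_neg hs]
    rw [this]
    exact le_ciSup (term_bdd M s) (n+1)

lemma interp_mem (M : PTS S) : ∀ φ s, 0 ≤ interp M 1 φ s ∧ interp M 1 φ s ≤ 1
  | .tt, s => by simp [interp]
  | .diam φ, s => by
    simp only [interp, one_mul]
    constructor
    · exact Finset.sum_nonneg fun s' _ => mul_nonneg (M.nonneg _ _) (interp_mem M φ s').1
    · calc ∑ s', M.prob s s' * interp M 1 φ s'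
          ≤ ∑ s', M.prob s s' * 1 := Finset.sum_le_sum fun s' _ =>
            mul_le_mul_of_nonneg_left (interp_mem M φ s').2 (M.nonneg _ _)
        _ = ∑ s', M.prob s s' := by simp
        _ ≤ 1 := by rcases M.sum01 s with h | h <;> rw [h] <;> norm_num
  | .conj φ ψ, s => by
    have h1 := interp_mem M φ s; have h2 := interp_mem M ψ s
    simp only [interp]
    exact ⟨le_min h1.1 h2.1, min_le_of_left_le h1.2⟩
  | .neg φ, s => by
    have h1 := interp_mem M φ s
    simp only [interp]
    constructor <;> linarith [h1.1, h1.2]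
  | .sub φ q, s => by
    have h1 := interp_mem M φ s
    have hq : (0:ℝ) ≤ (q : ℚ) := by exact_mod_cast q.2.1
    simp only [interp]
    constructor
    · exact le_max_right _ _
    · exact max_le (by linarith [h1.2]) zero_le_one

/-- The "limit constant" of a formula on never-terminating states. -/
noncomputable def cconst : Formula → ℝ
  | .tt => 1
  | .diam φ => cconst φ
  | .conj φ ψ => min (cconst φ) (cconst ψ)
  | .neg φ => 1 - cconst φ
  | .sub φ q => max (cconst φ - ((q : ℚ) : ℝ)) 0

lemma cconst_mem : ∀ φ : Formula, 0 ≤ cconst φ ∧ cconst φ ≤ 1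
  | .tt => ⟨zero_le_one, le_refl 1⟩
  | .diam φ => cconst_mem φ
  | .conj φ ψ => by
    have h1 := cconst_mem φ; have h2 := cconst_mem ψ
    exact ⟨le_min h1.1 h2.1, min_le_of_left_le h1.2⟩
  | .neg φ => by
    have h1 := cconst_mem φ
    simp only [cconst]; constructor <;> linarith [h1.1, h1.2]
  | .sub φ q => by
    have h1 := cconst_mem φ
    have hq : (0:ℝ) ≤ (q : ℚ) := by exact_mod_cast q.2.1
    exact ⟨le_max_right _ _, max_le (by linarith [h1.2]) zero_le_one⟩

lemma interp_close (M : PTS S) :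
    ∀ (φ : Formula) (s : S), |interp M 1 φ s - cconst φ| ≤ ⨆ n, term M n s
  | .tt, s => by
    simp only [interp, cconst, sub_self, abs_zero]
    exact termSup_nonneg M s
  | .diam φ, s => by
    simp only [interp, cconst, one_mul]
    by_cases hs : (∑ s', M.prob s s') = 0
    · have hz : ∀ s' ∈ Finset.univ, M.prob s s' = 0 :=
        (Finset.sum_eq_zero_iff_of_nonneg (fun s' _ => M.nonneg s s')).mp hs
      have h0 : ∑ s', M.prob s s' * interp M 1 φ s' = 0 :=
        Finset.sum_eq_zero fun s' hs' => by rw [hz s' hs', zero_mul]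
      rw [h0]
      have hone : term M 1 s = 1 := by simp only [term, if_pos hs]
      have hle : (1:ℝ) ≤ ⨆ n, term M n s := hone ▸ le_ciSup (term_bdd M s) 1
      have hc := cconst_mem φ
      rw [abs_of_nonpos (by linarith [hc.1])]
      linarith [hc.2]
    · have hs1 : (∑ s', M.prob s s') = 1 := (M.sum01 s).resolve_left hs
      have key : ∑ s', M.prob s s' * interp M 1 φ s' - cconst φ
          = ∑ s', M.prob s s' * (interp M 1 φ s' - cconst φ) := by
        simp only [mul_sub]
        rw [Finset.sum_sub_distrib, ← Finset.sum_mul, hs1, one_mul]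
      rw [key]
      calc |∑ s', M.prob s s' * (interp M 1 φ s' - cconst φ)|
          ≤ ∑ s', |M.prob s s' * (interp M 1 φ s' - cconst φ)| :=
            Finset.abs_sum_le_sum_abs _ _
        _ = ∑ s', M.prob s s' * |interp M 1 φ s' - cconst φ| := by
            apply Finset.sum_congr rfl; intro s' _
            rw [abs_mul, abs_of_nonneg (M.nonneg s s')]
        _ ≤ ∑ s', M.prob s s' * (⨆ n, term M n s') := Finset.sum_le_sum fun s' _ =>
            mul_le_mul_of_nonneg_left (interp_close M φ s') (M.nonneg s s')
        _ ≤ ⨆ n, term M n s := sum_termSup_le M s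
  | .conj φ ψ, s => by
    have h1 := interp_close M φ s; have h2 := interp_close M ψ s
    simp only [interp, cconst]
    calc |min (interp M 1 φ s) (interp M 1 ψ s) - min (cconst φ) (cconst ψ)|
        ≤ max |interp M 1 φ s - cconst φ| |interp M 1 ψ s - cconst ψ| :=
          abs_min_sub_min_le_max _ _ _ _
      _ ≤ ⨆ n, term M n s := max_le h1 h2
  | .neg φ, s => by
    have h1 := interp_close M φ s
    simp only [interp, cconst]
    calc |1 - interp M 1 φ s - (1 - cconst φ)| = |interp M 1 φ s - cconst φ| := by
          rw [← abs_neg]; ring_nf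
      _ ≤ ⨆ n, term M n s := h1
  | .sub φ q, s => by
    have h1 := interp_close M φ s
    simp only [interp, cconst]
    calc |max (interp M 1 φ s - ((q:ℚ):ℝ)) 0 - max (cconst φ - ((q:ℚ):ℝ)) 0|
        ≤ max |interp M 1 φ s - ((q:ℚ):ℝ) - (cconst φ - ((q:ℚ):ℝ))| |(0:ℝ) - 0| :=
          abs_max_sub_max_le_max _ _ _ _
      _ = |interp M 1 φ s - cconst φ| := by
          rw [sub_sub_sub_cancel_right, sub_self, abs_zero]
          exact max_eq_left (abs_nonneg _)
      _ ≤ ⨆ n, term M n s := h1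

/-- The formulas `φₙ` with `⟦φₙ⟧ = τₙ`. -/
def phiT : ℕ → Formula
  | 0 => .neg .tt
  | n+1 => .neg (.diam (.neg (phiT n)))

lemma interp_phiT (M : PTS S) : ∀ n s, interp M 1 (phiT n) s = term M n s
  | 0, s => by simp [phiT, interp, term]
  | n+1, s => by
    simp only [phiT, interp, term, one_mul]
    by_cases hs : (∑ s', M.prob s s') = 0
    · have hz : ∀ s' ∈ Finset.univ, M.prob s s' = 0 :=
        (Finset.sum_eq_zero_iff_of_nonneg (fun s' _ => M.nonneg s s')).mp hs
      have h0 : ∑ s', M.prob s s' * (1 - interp M 1 (phiT n) s') = 0 :=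
        Finset.sum_eq_zero fun s' hs' => by rw [hz s' hs', zero_mul]
      rw [h0, if_pos hs]; ring
    · have hs1 : (∑ s', M.prob s s') = 1 := (M.sum01 s).resolve_left hs
      rw [if_neg hs]
      have : ∑ s', M.prob s s' * (1 - interp M 1 (phiT n) s')
          = 1 - ∑ s', M.prob s s' * term M n s' := by
        simp only [mul_sub, mul_one]
        rw [Finset.sum_sub_distrib, hs1]
        congr 1
        exact Finset.sum_congr rfl fun s' _ => by rw [interp_phiT M n s']
      rw [this]; ring

end Stmt18Aux

/-- if the termination probability `τ_ω(s₂)` is zero, then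
`d₁(s₁,s₂) = τ_ω(s₁)`. -/
theorem stmt18 (S : Type) [Fintype S] (M : PTS S) (s₁ s₂ : S)
    (h : (⨆ n : ℕ, term M n s₂) = 0) :
    pdist M 1 s₁ s₂ = ⨆ n : ℕ, term M n s₁ := by
  open Stmt18Aux in
  have hne : Nonempty Formula := ⟨.tt⟩
  have hbddF : BddAbove (Set.range fun φ => interp M 1 φ s₁ - interp M 1 φ s₂) := by
    refine ⟨1, ?_⟩
    rintro x ⟨φ, rfl⟩
    have h1 := interp_mem M φ s₁; have h2 := interp_mem M φ s₂
    simp only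
    linarith [h1.2, h2.1]
  have hterm2 : ∀ n, term M n s₂ = 0 := fun n =>
    le_antisymm (h ▸ le_ciSup (term_bdd M s₂) n) (term_nonneg M n s₂)
  rw [pdist]
  apply le_antisymm
  · apply ciSup_le
    intro φ
    have h1 := interp_close M φ s₁
    have h2 := interp_close M φ s₂
    rw [h] at h2
    have h2' : interp M 1 φ s₂ = cconst φ := by
      have := abs_nonneg (interp M 1 φ s₂ - cconst φ)
      have : |interp M 1 φ s₂ - cconst φ| = 0 := le_antisymm h2 this
      have := abs_eq_zero.mp this
      linarith
    rw [h2']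
    have := (abs_le.mp h1).2
    linarith
  · apply ciSup_le
    intro n
    have e1 := interp_phiT M n s₁
    have e2 := interp_phiT M n s₂
    have : term M n s₁ = interp M 1 (phiT n) s₁ - interp M 1 (phiT n) s₂ := by
      rw [e1, e2, hterm2 n, sub_zero]
    rw [this]
    exact le_ciSup hbddF (phiT n)
end

section
/- Let ⟨S, π⟩ be a probabilistic transition system, R a probabilistic bisimulation on S, and ⟨S_R, π_R⟩ the quotient system whose states are the R-equivalence classes [s] with π_R([s],[s']) = ∑_{s'' R s'} π(s,s''). Then for all s₁, s₂ ∈ S, the behavioural pseudometric with discount factor 1 of the quotient system satisfies d_R([s₁],[s₂]) = d₁(s₁,s₂), where d₁ is the behavioural pseudometric with discount factor 1 of the original system. -/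
open scoped Classical
open Finset

variable {S : Type} [Fintype S]

/-- quotienting by a probabilistic bisimulation preserves the
behavioural pseudometric with discount factor `1`: `d_R([s₁],[s₂]) = d₁(s₁,s₂)`.
Here the quotient is presented by a surjection `q : S → T` whose fibres are exactly
the `R`-equivalence classes, and `N` is any probabilistic transition system on `T`
whose transition probabilities are those of the quotient system. -/
theorem stmt19 (S T : Type) [Fintype S] [Fintype T] (M : PTS S)
    (R : S → S → Prop) (hR : IsBisim M R)
    (q : S → T) (hq : Function.Surjective q)
    (hfib : ∀ s s', q s = q s' ↔ R s s')
    (N : PTS T)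
    (hN : ∀ s s', N.prob (q s) (q s') = ∑ s'', if R s' s'' then M.prob s s'' else 0)
    (s₁ s₂ : S) :
    pdist N 1 (q s₁) (q s₂) = pdist M 1 s₁ s₂ := by
  have key : ∀ (φ : Formula) (s : S), interp N 1 φ (q s) = interp M 1 φ s := by
    intro φ
    induction φ with
    | tt => intro s; simp [interp]
    | diam φ ih =>
      intro s
      simp only [interp, one_mul]
      have hfiber : ∀ t : T, N.prob (q s) t
          = ∑ s' ∈ Finset.univ.filter (fun s' => q s' = t), M.prob s s' := by
        intro t
        obtain ⟨s₀, rfl⟩ := hq t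
        rw [hN, Finset.sum_filter]
        refine Finset.sum_congr rfl fun x _ => ?_
        rw [show (q x = q s₀) = (R s₀ x) from propext (by rw [eq_comm]; exact hfib s₀ x)]
      calc ∑ t, N.prob (q s) t * interp N 1 φ t
          = ∑ t, ∑ s' ∈ Finset.univ.filter (fun s' => q s' = t),
              M.prob s s' * interp N 1 φ (q s') := by
            refine Finset.sum_congr rfl fun t _ => ?_
            rw [hfiber, Finset.sum_mul]
            refine Finset.sum_congr rfl fun x hx => ?_
            rw [(Finset.mem_filter.mp hx).2]
        _ = ∑ s', M.prob s s' * interp N 1 φ (q s') :=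
            Finset.sum_fiberwise _ _ _
        _ = ∑ s', M.prob s s' * interp M 1 φ s' := by
            refine Finset.sum_congr rfl fun x _ => by rw [ih]
    | conj φ ψ ihφ ihψ => intro s; simp [interp, ihφ, ihψ]
    | neg φ ih => intro s; simp [interp, ih]
    | sub φ r ih => intro s; simp [interp, ih]
  unfold pdist
  exact congrArg _ (funext fun φ => by rw [key, key])
end
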